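/- arXiv:1509.01519 — 4 statements merged into one kernel-verified Lean document; each statement's English description precedes it below -/
import Mathlib

section
/- Let K ⊆ R^β be a submodule, ℓ ≥ 1, and let U be a β×β matrix over R. Let L be the smallest submodule of R^β with K ⊆ L^{[p^ℓ]}. Then U·L (the submodule generated by {U·w : w ∈ L}) is the smallest submodule L'' of R^β such that U^{[p^ℓ]}·K ⊆ (L'')^{[p^ℓ]}, where U^{[p^ℓ]}·K is the submodule generated by {U^{[p^ℓ]}·v : v ∈ K}. In other words, I_ℓ(U^{[p^ℓ]}·K) = U·I_ℓ(K). -/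
/-!
Write `q = p^ℓ`. The ring `R = K[x₁,…,xₙ]` is free over its subring `R^q` of `q`-th powers,
with basis `x^a b_t` (`0 ≤ aᵢ < q`, `b_t` a basis of `K` over `K^q`). If `c_t` are the
coordinates in this basis, a vector `x` lies in `W^{[q]}` exactly when every `c_t(x)` (taken
entrywise) lies in `W`. Since `c_t(U^{[q]} v) = U c_t(v)`, this gives
`(U^{[q]})⁻¹(W^{[q]}) = (U⁻¹ W)^{[q]}` (flatness of Frobenius), and both halves of the
minimality statement follow from the adjunction between `map` and `comap`.
-/

/-- The bracket power `L^{[q]}` of a submodule `L ⊆ T^β`: the submodule generated by the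
entrywise `q`-th powers `v^{[q]}` of the vectors `v ∈ L`. -/
def bracketPower {T : Type*} [CommRing T] {β : ℕ}
    (q : ℕ) (L : Submodule T (Fin β → T)) : Submodule T (Fin β → T) :=
  Submodule.span T ((fun v : Fin β → T => fun i => (v i) ^ q) '' (L : Set (Fin β → T)))

open Matrix

theorem bracketPower_mono {R : Type*} [CommRing R] {β : ℕ} (q : ℕ)
    {W W' : Submodule R (Fin β → R)} (h : W ≤ W') : bracketPower q W ≤ bracketPower q W' :=
  Submodule.span_mono (Set.image_mono h)

/-- A dual basis of `R` over its subring of `q`-th powers: every `x` is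
`∑ t, (coeff x t)^q * gen t`, with `coeff` semilinear along `a ↦ a^q`. This is the dual basis
criterion for `R` to be projective over `R^q`; uniqueness of the coefficients is not required. -/
structure PowDualBasis (ι R : Type*) [CommRing R] (q : ℕ) where
  gen : ι → R
  coeff : R →+ ι →₀ R
  coeff_pow_mul (a x : R) : coeff (a ^ q * x) = a • coeff x
  sum_coeff (x : R) : (coeff x).sum (fun t r => r ^ q * gen t) = x

namespace PowDualBasis

section Coord

variable {ι R : Type*} [CommRing R] {q : ℕ} (D : PowDualBasis ι R q)

/-- For `q = 0` the axioms force `R` to be the zero ring. -/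
theorem zero_pow_mul_gen (t : ι) : (0 : R) ^ q * D.gen t = 0 := by
  rcases eq_or_ne q 0 with rfl | hq
  · have hcoeff (x : R) : D.coeff x = 0 := by simpa using D.coeff_pow_mul 0 x
    have hgen := D.sum_coeff (D.gen t)
    simp only [hcoeff, Finsupp.sum_zero_index] at hgen
    rw [← hgen, mul_zero]
  · rw [zero_pow hq, zero_mul]

theorem sum_coeff_of_support_subset (x : R) {T : Finset ι} (hT : (D.coeff x).support ⊆ T) :
    ∑ t ∈ T, D.coeff x t ^ q * D.gen t = x := by
  rw [← Finsupp.sum_of_support_subset _ hT (fun t r => r ^ q * D.gen t)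
    fun t _ => D.zero_pow_mul_gen t, D.sum_coeff]

variable {β : ℕ}

noncomputable def coord (t : ι) : (Fin β → R) →+ (Fin β → R) :=
  ((Finsupp.applyAddHom t).comp D.coeff).compLeft (Fin β)

theorem coord_apply (t : ι) (x : Fin β → R) (i : Fin β) :
    D.coord t x i = D.coeff (x i) t :=
  rfl

theorem coord_smul_pow (t : ι) (r : R) (w : Fin β → R) :
    D.coord t (r • fun i => w i ^ q) = D.coeff r t • w := by
  ext i
  rw [coord_apply, Pi.smul_apply, smul_eq_mul, mul_comm, D.coeff_pow_mul]
  exact mul_comm _ _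

theorem coord_mulVec_map_pow {γ : ℕ} (U : Matrix (Fin β) (Fin γ) R) (t : ι) (v : Fin γ → R) :
    D.coord t (U.map (· ^ q) *ᵥ v) = U *ᵥ D.coord t v := by
  ext i
  simp [coord_apply, mulVec, dotProduct, D.coeff_pow_mul]

theorem mem_bracketPower_iff (W : Submodule R (Fin β → R)) (x : Fin β → R) :
    x ∈ bracketPower q W ↔ ∀ t, D.coord t x ∈ W := by
  classical
  constructor
  · intro hx t
    obtain ⟨l, hl, rfl⟩ := (Finsupp.mem_span_image_iff_linearCombination R).mp hx
    rw [Finsupp.linearCombination_apply, map_finsuppSum]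
    exact Submodule.finsuppSum_mem _ _ _ _ fun w hw => by
      rw [coord_smul_pow]
      exact W.smul_mem _ (hl (Finsupp.mem_support_iff.mpr hw))
  · intro hx
    let T := Finset.univ.biUnion fun i => (D.coeff (x i)).support
    have hx_eq : x = ∑ t ∈ T, D.gen t • fun i => D.coord t x i ^ q := by
      ext i
      simp only [Finset.sum_apply, Pi.smul_apply, smul_eq_mul, coord_apply, mul_comm (D.gen _)]
      exact (D.sum_coeff_of_support_subset (x i)
        (Finset.subset_biUnion_of_mem (fun i => (D.coeff (x i)).support) (Finset.mem_univ i))).symm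
    rw [hx_eq]
    exact Submodule.sum_mem _ fun t _ =>
      Submodule.smul_mem _ _ (Submodule.subset_span ⟨_, hx t, rfl⟩)

end Coord

variable {ι R : Type*} [CommRing R] {q β γ : ℕ}

theorem comap_mulVecLin_bracketPower (D : PowDualBasis ι R q) (U : Matrix (Fin β) (Fin γ) R)
    (W : Submodule R (Fin β → R)) :
    (bracketPower q W).comap (U.map (· ^ q)).mulVecLin =
      bracketPower q (W.comap U.mulVecLin) := by
  ext v
  simp only [Submodule.mem_comap, mulVecLin_apply, D.mem_bracketPower_iff,
    coord_mulVec_map_pow]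

theorem isLeast_map_mulVecLin (D : PowDualBasis ι R q) (U : Matrix (Fin β) (Fin β) R)
    {K L : Submodule R (Fin β → R)} (hL : IsLeast {W | K ≤ bracketPower q W} L) :
    IsLeast {W | K.map (U.map (· ^ q)).mulVecLin ≤ bracketPower q W} (L.map U.mulVecLin) := by
  refine ⟨Submodule.map_le_iff_le_comap.mpr ?_, fun W hW => Submodule.map_le_iff_le_comap.mpr ?_⟩
  · rw [D.comap_mulVecLin_bracketPower]
    exact hL.1.trans (bracketPower_mono q (Submodule.le_comap_map _ _))
  · refine hL.2 (show K ≤ _ from ?_)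
    rw [← D.comap_mulVecLin_bracketPower]
    exact Submodule.map_le_iff_le_comap.mp hW

noncomputable def ofField (K : Type*) [Field K] (p e : ℕ) [ExpChar K p] :
    PowDualBasis (Module.Basis.ofVectorSpaceIndex (iterateFrobenius K p e).fieldRange K) K
      (p ^ e) :=
  let φ := iterateFrobenius K p e
  let B := Module.Basis.ofVectorSpace φ.fieldRange K
  { gen := B
    coeff := (Finsupp.mapRange.addMonoidHom φ.rangeRestrictFieldEquiv.symm.toAddMonoidHom).comp
      B.repr.toAddMonoidHom
    coeff_pow_mul a x := by
      have hx : a ^ p ^ e * x = φ.rangeRestrictFieldEquiv a • x := by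
        simp [Subfield.smul_def, φ, iterateFrobenius_def]
      ext t
      simp [hx]
    sum_coeff x := by
      rw [AddMonoidHom.comp_apply, Finsupp.mapRange.addMonoidHom_apply,
        Finsupp.sum_mapRange_index fun _ => by
          rw [zero_pow (pow_ne_zero e (expChar_ne_zero K p)), zero_mul]]
      conv_rhs => rw [← B.linearCombination_repr x, Finsupp.linearCombination_apply]
      refine Finsupp.sum_congr fun t _ => ?_
      simp [← iterateFrobenius_def p e, Subfield.smul_def, φ] }

section MvPolynomial

open MvPolynomial

variable (σ : Type*)

/-- Since `x^m r = (x^(m / q))^q * x^(m % q) * r`, the monomial `x^m r` has coordinate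
`x^(m / q) (coeff r t)` at `(m % q, t)` and no others. -/
noncomputable def monomialCoord (D : PowDualBasis ι R q) (m : σ →₀ ℕ) :
    R →+ ((σ →₀ ℕ) × ι) →₀ MvPolynomial σ R :=
  (Finsupp.mapDomain.addMonoidHom (Prod.mk (m.mapRange (· % q) (Nat.zero_mod q)))).comp
    ((Finsupp.mapRange.addMonoidHom
      (monomial (m.mapRange (· / q) (Nat.zero_div q))).toAddMonoidHom).comp D.coeff)

theorem monomialCoord_apply (D : PowDualBasis ι R q) (m : σ →₀ ℕ) (r : R) :
    D.monomialCoord σ m r = Finsupp.mapDomain (Prod.mk (m.mapRange (· % q) (Nat.zero_mod q)))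
      ((D.coeff r).mapRange (monomial (m.mapRange (· / q) (Nat.zero_div q))) (map_zero _)) :=
  rfl

theorem monomialCoord_pow_mul (D : PowDualBasis ι R q) (hq : q ≠ 0) (m m' : σ →₀ ℕ) (a r : R) :
    D.monomialCoord σ (q • m + m') (a ^ q * r) = monomial m a • D.monomialCoord σ m' r := by
  have hmod : (q • m + m').mapRange (· % q) (Nat.zero_mod q) =
      m'.mapRange (· % q) (Nat.zero_mod q) := by
    ext i; simp
  have hdiv : (q • m + m').mapRange (· / q) (Nat.zero_div q) =
      m + m'.mapRange (· / q) (Nat.zero_div q) := by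
    ext i; simp [Nat.mul_add_div (Nat.pos_of_ne_zero hq)]
  rw [monomialCoord_apply, monomialCoord_apply, hmod, hdiv, D.coeff_pow_mul,
    ← Finsupp.mapDomain_smul]
  congr 1
  ext t
  simp [monomial_mul]

theorem sum_monomialCoord (D : PowDualBasis ι R q) (hq : q ≠ 0) (m : σ →₀ ℕ) (r : R) :
    (D.monomialCoord σ m r).sum (fun j s => s ^ q * monomial j.1 (D.gen j.2)) =
      monomial m r := by
  have hm : q • m.mapRange (· / q) (Nat.zero_div q) + m.mapRange (· % q) (Nat.zero_mod q) = m := by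
    ext i; simp [Nat.div_add_mod]
  rw [monomialCoord_apply, Finsupp.sum_mapDomain_index_inj (Prod.mk_right_injective _),
    Finsupp.sum_mapRange_index fun _ => by rw [zero_pow hq, zero_mul]]
  conv_rhs => rw [← D.sum_coeff r, Finsupp.sum, map_sum]
  refine Finset.sum_congr rfl fun t _ => ?_
  dsimp only
  rw [monomial_pow, monomial_mul, hm]

variable {p e : ℕ} [ExpChar R p]

noncomputable def mvPolynomial (D : PowDualBasis ι R (p ^ e)) :
    PowDualBasis ((σ →₀ ℕ) × ι) (MvPolynomial σ R) (p ^ e) :=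
  have hq : p ^ e ≠ 0 := pow_ne_zero e (expChar_ne_zero R p)
  let coeff := (Finsupp.liftAddHom (D.monomialCoord σ)).comp
    AddMonoidAlgebra.coeffAddEquiv.toAddMonoidHom
  have coeff_monomial (m : σ →₀ ℕ) (r : R) : coeff (monomial m r) = D.monomialCoord σ m r :=
    Finsupp.liftAddHom_apply_single _ _ _
  { gen j := monomial j.1 (D.gen j.2)
    coeff := coeff
    coeff_pow_mul a f := by
      induction a using MvPolynomial.induction_on' with
      | monomial m u =>
        induction f using MvPolynomial.induction_on' with
        | monomial m' r =>
          rw [monomial_pow, monomial_mul, coeff_monomial, coeff_monomial,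
            monomialCoord_pow_mul σ D hq]
        | add f g hf hg => rw [mul_add, map_add, map_add, hf, hg, smul_add]
      | add a a' ha ha' => rw [add_pow_expChar_pow, add_mul, map_add, ha, ha', add_smul]
    sum_coeff f := by
      induction f using MvPolynomial.induction_on' with
      | monomial m r => rw [coeff_monomial, sum_monomialCoord σ D hq]
      | add f g hf hg =>
        rw [map_add, Finsupp.sum_add_index' (fun _ => by rw [zero_pow hq, zero_mul])
          fun _ _ _ => by rw [add_pow_expChar_pow, add_mul], hf, hg] }

end MvPolynomial

end PowDualBasis

theorem Ie_matrix_mul_general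
    {K : Type*} [Field K] {p n β : ℕ} (hp : p.Prime) [CharP K p]
    (ℓ : ℕ)
    (U : Matrix (Fin β) (Fin β) (MvPolynomial (Fin n) K))
    (K' L : Submodule (MvPolynomial (Fin n) K) (Fin β → MvPolynomial (Fin n) K))
    (hL : IsLeast {W : Submodule (MvPolynomial (Fin n) K) (Fin β → MvPolynomial (Fin n) K) |
        K' ≤ bracketPower (p ^ ℓ) W} L) :
    IsLeast {W : Submodule (MvPolynomial (Fin n) K) (Fin β → MvPolynomial (Fin n) K) |
        Submodule.map (Matrix.mulVecLin (U.map (· ^ p ^ ℓ))) K' ≤ bracketPower (p ^ ℓ) W}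
      (Submodule.map (Matrix.mulVecLin U) L) := by
  have : ExpChar K p := ExpChar.prime hp
  exact ((PowDualBasis.ofField K p ℓ).mvPolynomial (Fin n)).isLeast_map_mulVecLin U hL

/-- Over `R = K[x₁,…,xₙ]` with `K` a field of prime characteristic `p`:
let `K' ⊆ R^β` be a submodule, `ℓ ≥ 1`, `U` a `β×β` matrix over `R`, and let `L` be the
smallest submodule with `K' ⊆ L^{[p^ℓ]}`.  Then `U·L` is the smallest submodule `L''` with
`U^{[p^ℓ]}·K' ⊆ (L'')^{[p^ℓ]}`; i.e. `I_ℓ(U^{[p^ℓ]}·K') = U·I_ℓ(K')`. -/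
theorem Ie_matrix_mul
    {K : Type*} [Field K] {p n β : ℕ} (hp : p.Prime) [CharP K p]
    (ℓ : ℕ) (hℓ : 1 ≤ ℓ)
    (U : Matrix (Fin β) (Fin β) (MvPolynomial (Fin n) K))
    (K' L : Submodule (MvPolynomial (Fin n) K) (Fin β → MvPolynomial (Fin n) K))
    (hL : IsLeast {W : Submodule (MvPolynomial (Fin n) K) (Fin β → MvPolynomial (Fin n) K) |
        K' ≤ bracketPower (p ^ ℓ) W} L) :
    IsLeast {W : Submodule (MvPolynomial (Fin n) K) (Fin β → MvPolynomial (Fin n) K) |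
        Submodule.map (Matrix.mulVecLin (U.map (· ^ p ^ ℓ))) K' ≤ bracketPower (p ^ ℓ) W}
      (Submodule.map (Matrix.mulVecLin U) L) :=
  Ie_matrix_mul_general hp ℓ U K' L hL
end

section
/- Let U be a β×β matrix over R and for e ≥ 1 let V_e ⊆ R^β be the smallest submodule such that the column span of the matrix product U^{[p^{e-1}]}·U^{[p^{e-2}]}·⋯·U^{[p]}·U is contained in (V_e)^{[p^e]}. If V_e = V_{e+1} for some e ≥ 1, then V_{e+j} = V_e for all j ≥ 0. -/
/-- The matrix product `U^{[p^{e-1}]} · U^{[p^{e-2}]} · ⋯ · U^{[p]} · U` (with the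
convention that it is the identity matrix for `e = 0`). -/
def frobProd {T : Type*} [CommRing T] {β : ℕ} (p : ℕ)
    (U : Matrix (Fin β) (Fin β) T) : ℕ → Matrix (Fin β) (Fin β) T
  | 0 => 1
  | e + 1 => (U.map (· ^ p ^ e)) * frobProd p U e

open MvPolynomial

section General
variable {T : Type*} [CommRing T] {β : ℕ}

lemma bp_mono (q : ℕ) {L L' : Submodule T (Fin β → T)} (h : L ≤ L') :
    bracketPower q L ≤ bracketPower q L' :=
  Submodule.span_mono (Set.image_mono h)

lemma mem_bp (q : ℕ) {L : Submodule T (Fin β → T)} {v : Fin β → T} (hv : v ∈ L) :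
    (fun i => v i ^ q) ∈ bracketPower q L :=
  Submodule.subset_span ⟨v, hv, rfl⟩

lemma bp_bp_le (q q' : ℕ) (L : Submodule T (Fin β → T)) :
    bracketPower (q * q') L ≤ bracketPower q' (bracketPower q L) := by
  rw [bracketPower, Submodule.span_le]
  rintro _ ⟨v, hv, rfl⟩
  have := mem_bp q' (mem_bp q hv)
  simpa [pow_mul] using this

variable (p : ℕ) [Fact p.Prime] [CharP T p]

lemma bp_bp_ge (a q : ℕ) (L : Submodule T (Fin β → T)) :
    bracketPower (p ^ a) (bracketPower q L) ≤ bracketPower (q * p ^ a) L := by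
  have key : ∀ w ∈ bracketPower q L,
      (fun i => w i ^ p ^ a) ∈ bracketPower (q * p ^ a) L := by
    intro w hw
    induction hw using Submodule.span_induction with
    | mem x hx =>
      obtain ⟨v, hv, rfl⟩ := hx
      simpa [pow_mul] using mem_bp (q * p ^ a) hv
    | zero =>
      have h0 : (fun i => (0 : Fin β → T) i ^ p ^ a) = (0 : Fin β → T) := by
        funext i
        simp [zero_pow (pow_ne_zero a (Fact.out : p.Prime).ne_zero)]
      rw [h0]; exact Submodule.zero_mem _
    | add x y _ _ hx hy =>
      have h0 : (fun i => (x + y) i ^ p ^ a)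
          = (fun i => x i ^ p ^ a) + fun i => y i ^ p ^ a := by
        funext i; simp [add_pow_char_pow]
      rw [h0]; exact Submodule.add_mem _ hx hy
    | smul r x _ hx =>
      have h0 : (fun i => (r • x) i ^ p ^ a) = r ^ p ^ a • fun i => x i ^ p ^ a := by
        funext i; simp [mul_pow]
      rw [h0]; exact Submodule.smul_mem _ _ hx
  rw [bracketPower, Submodule.span_le]
  rintro _ ⟨w, hw, rfl⟩
  exact key w hw

lemma mulVec_pow (a : ℕ) (U : Matrix (Fin β) (Fin β) T) (v : Fin β → T) :
    (U.map (· ^ p ^ a)).mulVec (fun i => v i ^ p ^ a) = fun i => (U.mulVec v) i ^ p ^ a := by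
  funext i
  simp only [Matrix.mulVec, dotProduct, Matrix.map_apply]
  rw [sum_pow_char_pow]
  exact Finset.sum_congr rfl fun j _ => (mul_pow _ _ _).symm

lemma map_bp (a : ℕ) (U : Matrix (Fin β) (Fin β) T) (L : Submodule T (Fin β → T)) :
    Submodule.map (Matrix.mulVecLin (U.map (· ^ p ^ a))) (bracketPower (p ^ a) L)
      ≤ bracketPower (p ^ a) (Submodule.map U.mulVecLin L) := by
  rw [bracketPower, Submodule.map_span, Submodule.span_le]
  rintro _ ⟨_, ⟨v, hv, rfl⟩, rfl⟩
  rw [Matrix.mulVecLin_apply, mulVec_pow]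
  exact mem_bp _ ⟨v, hv, rfl⟩

end General


noncomputable def frobSubfield (K : Type*) [Field K] (p : ℕ) [Fact p.Prime] [CharP K p]
    (a : ℕ) : Subfield K := (iterateFrobenius K p a).fieldRange

section Cartier
variable {K : Type*} [Field K] {p : ℕ} [Fact p.Prime] [CharP K p] (a : ℕ)

noncomputable def qRoot (s : frobSubfield K p a) : K :=
  Classical.choose ((RingHom.mem_fieldRange).1 s.2)

lemma qRoot_spec (s : frobSubfield K p a) : (qRoot a s) ^ p ^ a = (s : K) := by
  have := Classical.choose_spec ((RingHom.mem_fieldRange).1 s.2)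
  rwa [iterateFrobenius_def] at this

lemma pow_mem_frobSubfield (t : K) : t ^ p ^ a ∈ frobSubfield K p a :=
  ⟨t, iterateFrobenius_def p a t⟩

lemma frobPow_inj {x y : K} (h : x ^ p ^ a = y ^ p ^ a) : x = y := by
  have : iterateFrobenius K p a x = iterateFrobenius K p a y := by
    rwa [iterateFrobenius_def, iterateFrobenius_def]
  exact (iterateFrobenius K p a).injective this

lemma qRoot_add (s t : frobSubfield K p a) :
    qRoot a (s + t) = qRoot a s + qRoot a t := by
  apply frobPow_inj (p := p) a
  rw [add_pow_char_pow, qRoot_spec, qRoot_spec, qRoot_spec]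
  rfl

lemma qRoot_zero : qRoot a (0 : frobSubfield K p a) = 0 := by
  apply frobPow_inj (p := p) a
  rw [qRoot_spec, zero_pow (pow_ne_zero a (Fact.out : p.Prime).ne_zero)]
  rfl

lemma qRoot_pow_mul (t : K) (s : frobSubfield K p a) :
    qRoot a (⟨t ^ p ^ a, pow_mem_frobSubfield a t⟩ * s) = t * qRoot a s := by
  apply frobPow_inj (p := p) a
  rw [qRoot_spec, mul_pow, qRoot_spec]
  rfl

end Cartier

noncomputable def kBasis (K : Type*) [Field K] (p : ℕ) [Fact p.Prime] [CharP K p] (a : ℕ) :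
    Module.Basis (Module.Basis.ofVectorSpaceIndex ↥(frobSubfield K p a) K) ↥(frobSubfield K p a) K :=
  Module.Basis.ofVectorSpace _ K

noncomputable def expMod {n : ℕ} (q : ℕ) (μ : Fin n →₀ ℕ) : Fin n →₀ ℕ :=
  μ.mapRange (· % q) (Nat.zero_mod q)

noncomputable def expDiv {n : ℕ} (q : ℕ) (μ : Fin n →₀ ℕ) : Fin n →₀ ℕ :=
  μ.mapRange (· / q) (Nat.zero_div q)

lemma expMod_smul_add {n : ℕ} (q : ℕ) (σ μ : Fin n →₀ ℕ) :
    expMod q (q • σ + μ) = expMod q μ := by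
  ext s
  simp only [expMod, Finsupp.mapRange_apply, Finsupp.add_apply, Finsupp.smul_apply, smul_eq_mul]
  exact Nat.mul_add_mod q (σ s) (μ s)

lemma expDiv_smul_add {n : ℕ} {q : ℕ} (hq : 0 < q) (σ μ : Fin n →₀ ℕ) :
    expDiv q (q • σ + μ) = σ + expDiv q μ := by
  ext s
  simp only [expDiv, Finsupp.mapRange_apply, Finsupp.add_apply, Finsupp.smul_apply, smul_eq_mul]
  exact Nat.mul_add_div hq (σ s) (μ s)

lemma exp_reconstruct {n : ℕ} {q : ℕ} (μ : Fin n →₀ ℕ) :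
    expMod q μ + q • expDiv q μ = μ := by
  ext s
  simp only [expMod, expDiv, Finsupp.add_apply, Finsupp.smul_apply, Finsupp.mapRange_apply,
    smul_eq_mul]
  rw [add_comm]
  exact Nat.div_add_mod (μ s) q

section CartD
variable {K : Type*} [Field K] {p : ℕ} [Fact p.Prime] [CharP K p] {n : ℕ} (a : ℕ)

noncomputable def cartD (i : Module.Basis.ofVectorSpaceIndex ↥(frobSubfield K p a) K)
    (ν : Fin n →₀ ℕ) (f : MvPolynomial (Fin n) K) : MvPolynomial (Fin n) K :=
  f.support.sum fun μ =>
    if expMod (p ^ a) μ = ν then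
      monomial (expDiv (p ^ a) μ) (qRoot a ((kBasis K p a).repr (coeff μ f) i)) else 0

lemma cartD_eq_sum_subset {f : MvPolynomial (Fin n) K} {T : Finset (Fin n →₀ ℕ)}
    (hT : f.support ⊆ T)
    (i : Module.Basis.ofVectorSpaceIndex ↥(frobSubfield K p a) K) (ν : Fin n →₀ ℕ) :
    cartD a i ν f = T.sum fun μ =>
      if expMod (p ^ a) μ = ν then
        monomial (expDiv (p ^ a) μ) (qRoot a ((kBasis K p a).repr (coeff μ f) i)) else
        (0 : MvPolynomial (Fin n) K) := by
  rw [cartD]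
  refine Finset.sum_subset hT fun μ _ hμ => ?_
  rw [notMem_support_iff.1 hμ]
  simp [qRoot_zero]

lemma cartD_add (i : Module.Basis.ofVectorSpaceIndex ↥(frobSubfield K p a) K)
    (ν : Fin n →₀ ℕ) (f g : MvPolynomial (Fin n) K) :
    cartD a i ν (f + g) = cartD a i ν f + cartD a i ν g := by
  rw [cartD_eq_sum_subset a (T := f.support ∪ g.support) (support_add) i ν,
    cartD_eq_sum_subset a (T := f.support ∪ g.support) Finset.subset_union_left i ν,
    cartD_eq_sum_subset a (T := f.support ∪ g.support) Finset.subset_union_right i ν,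
    ← Finset.sum_add_distrib]
  refine Finset.sum_congr rfl fun μ _ => ?_
  split_ifs with h
  · rw [coeff_add, map_add, Finsupp.add_apply, qRoot_add, map_add]
  · rw [add_zero]

lemma cartD_monomial (i : Module.Basis.ofVectorSpaceIndex ↥(frobSubfield K p a) K)
    (ν μ : Fin n →₀ ℕ) (c : K) :
    cartD a i ν (monomial μ c)
      = if expMod (p ^ a) μ = ν then
          monomial (expDiv (p ^ a) μ) (qRoot a ((kBasis K p a).repr c i)) else 0 := by
  rw [cartD_eq_sum_subset a (T := {μ}) support_monomial_subset i ν, Finset.sum_singleton,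
    coeff_monomial, if_pos rfl]

lemma cartD_zero (i : Module.Basis.ofVectorSpaceIndex ↥(frobSubfield K p a) K)
    (ν : Fin n →₀ ℕ) : cartD a i ν (0 : MvPolynomial (Fin n) K) = 0 := by
  rw [cartD, support_zero]
  rfl

end CartD

section CartD2
variable {K : Type*} [Field K] {p : ℕ} [Fact p.Prime] [CharP K p] {n : ℕ} (a : ℕ)

lemma qpow_ne_zero : (p : ℕ) ^ a ≠ 0 := pow_ne_zero a (Fact.out : p.Prime).ne_zero

lemma cartD_pow_mul (i : Module.Basis.ofVectorSpaceIndex ↥(frobSubfield K p a) K)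
    (ν : Fin n →₀ ℕ) (g f : MvPolynomial (Fin n) K) :
    cartD a i ν (g ^ p ^ a * f) = g * cartD a i ν f := by
  induction f using MvPolynomial.induction_on' generalizing g with
  | add f₁ f₂ hf₁ hf₂ => rw [mul_add, cartD_add, hf₁, hf₂, cartD_add, mul_add]
  | monomial μ c =>
    induction g using MvPolynomial.induction_on' with
    | add g₁ g₂ hg₁ hg₂ => rw [add_pow_char_pow, add_mul, cartD_add, hg₁, hg₂, add_mul]
    | monomial σ t =>
      rw [monomial_pow, monomial_mul, cartD_monomial, cartD_monomial, expMod_smul_add,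
        expDiv_smul_add (pow_pos (Fact.out : p.Prime).pos a)]
      have hrepr : (kBasis K p a).repr (t ^ p ^ a * c) i
          = (⟨t ^ p ^ a, pow_mem_frobSubfield a t⟩ : frobSubfield K p a)
            * (kBasis K p a).repr c i := by
        have h0 : t ^ p ^ a * c
            = (⟨t ^ p ^ a, pow_mem_frobSubfield a t⟩ : frobSubfield K p a) • c := rfl
        rw [h0, map_smul, Finsupp.smul_apply, smul_eq_mul]
      split_ifs with h
      · rw [hrepr, qRoot_pow_mul, monomial_mul]
      · rw [mul_zero]

noncomputable def cartSupp [DecidableEq K] (f : MvPolynomial (Fin n) K) :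
    Finset ((Module.Basis.ofVectorSpaceIndex ↥(frobSubfield K p a) K) × (Fin n →₀ ℕ)) :=
  f.support.biUnion fun μ =>
    ((kBasis K p a).repr (coeff μ f)).support.image fun i => (i, expMod (p ^ a) μ)

lemma cartD_ne_zero_mem [DecidableEq K] {f : MvPolynomial (Fin n) K}
    {i : Module.Basis.ofVectorSpaceIndex ↥(frobSubfield K p a) K} {ν : Fin n →₀ ℕ}
    (h : cartD a i ν f ≠ 0) : (i, ν) ∈ cartSupp a f := by
  by_contra hm
  apply h
  rw [cartD]
  refine Finset.sum_eq_zero fun μ hμ => ?_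
  split_ifs with hm'
  · have hz : (kBasis K p a).repr (coeff μ f) i = 0 := by
      by_contra hne
      refine hm ?_
      rw [cartSupp]
      exact Finset.mem_biUnion.2 ⟨μ, hμ, Finset.mem_image.2
        ⟨i, Finsupp.mem_support_iff.2 hne, by rw [hm']⟩⟩
    rw [hz, qRoot_zero, map_zero]
  · rfl

lemma sum_cartD [DecidableEq K] (f : MvPolynomial (Fin n) K)
    (T : Finset ((Module.Basis.ofVectorSpaceIndex ↥(frobSubfield K p a) K) × (Fin n →₀ ℕ)))
    (hT : ∀ l, cartD a l.1 l.2 f ≠ 0 → l ∈ T) :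
    (∑ l ∈ T, monomial l.2 ((kBasis K p a) l.1 : K) * (cartD a l.1 l.2 f) ^ p ^ a) = f := by
  induction f using MvPolynomial.induction_on' generalizing T with
  | add f₁ f₂ hf₁ hf₂ =>
    set T' := (T ∪ cartSupp a f₁) ∪ cartSupp a f₂ with hT'def
    have hsub : T ⊆ T' := Finset.subset_union_left.trans Finset.subset_union_left
    have hext : (∑ l ∈ T, monomial l.2 ((kBasis K p a) l.1 : K)
          * (cartD a l.1 l.2 (f₁ + f₂)) ^ p ^ a)
        = ∑ l ∈ T', monomial l.2 ((kBasis K p a) l.1 : K)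
          * (cartD a l.1 l.2 (f₁ + f₂)) ^ p ^ a := by
      refine Finset.sum_subset hsub fun l _ hl => ?_
      have h0 : cartD a l.1 l.2 (f₁ + f₂) = 0 := by
        by_contra hne; exact hl (hT l hne)
      rw [h0, zero_pow (qpow_ne_zero a), mul_zero]
    rw [hext, Finset.sum_congr rfl (fun l _ => by
        rw [cartD_add, add_pow_char_pow, mul_add]),
      Finset.sum_add_distrib,
      hf₁ T' (fun l h => Finset.subset_union_left
        (Finset.subset_union_right (cartD_ne_zero_mem a h))),
      hf₂ T' (fun l h => Finset.subset_union_right (cartD_ne_zero_mem a h))]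
  | monomial μ c =>
    set T₀ := (((kBasis K p a).repr c).support.image
      fun i => (i, expMod (p ^ a) μ)) with hT₀def
    have key : ∀ (S : Finset _), T₀ ⊆ S →
        (∀ l ∈ S, l ∉ T₀ → monomial l.2 ((kBasis K p a) l.1 : K)
          * (cartD a l.1 l.2 (monomial μ c)) ^ p ^ a = 0) → True := fun _ _ _ => trivial
    have hvanish : ∀ l, l ∉ T₀ → monomial l.2 ((kBasis K p a) l.1 : K)
        * (cartD a l.1 l.2 (monomial μ c)) ^ p ^ a = 0 := by
      rintro ⟨i, ν⟩ hl0
      rw [cartD_monomial]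
      split_ifs with hm
      · have hz : (kBasis K p a).repr c i = 0 := by
          by_contra hne
          exact hl0 (Finset.mem_image.2 ⟨i, Finsupp.mem_support_iff.2 hne, by rw [hm]⟩)
        rw [hz, qRoot_zero, map_zero, zero_pow (qpow_ne_zero a), mul_zero]
      · rw [zero_pow (qpow_ne_zero a), mul_zero]
    have step1 : (∑ l ∈ T, monomial l.2 ((kBasis K p a) l.1 : K)
          * (cartD a l.1 l.2 (monomial μ c)) ^ p ^ a)
        = ∑ l ∈ T ∪ T₀, monomial l.2 ((kBasis K p a) l.1 : K)
          * (cartD a l.1 l.2 (monomial μ c)) ^ p ^ a := by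
      refine Finset.sum_subset Finset.subset_union_left fun l _ hl => ?_
      have h0 : cartD a l.1 l.2 (monomial μ c) = 0 := by
        by_contra hne; exact hl (hT l hne)
      rw [h0, zero_pow (qpow_ne_zero a), mul_zero]
    have step2 : (∑ l ∈ T₀, monomial l.2 ((kBasis K p a) l.1 : K)
          * (cartD a l.1 l.2 (monomial μ c)) ^ p ^ a)
        = ∑ l ∈ T ∪ T₀, monomial l.2 ((kBasis K p a) l.1 : K)
          * (cartD a l.1 l.2 (monomial μ c)) ^ p ^ a :=
      Finset.sum_subset Finset.subset_union_right fun l _ hl => hvanish l hl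
    rw [step1, ← step2, hT₀def]
    rw [Finset.sum_image (f := fun l => monomial l.2 ((kBasis K p a) l.1 : K)
        * (cartD a l.1 l.2 (monomial μ c)) ^ p ^ a)
      (g := fun i => (i, expMod (p ^ a) μ))
      (by intro x hx y hy hxy; exact (Prod.ext_iff.1 hxy).1)]
    have hterm : ∀ i ∈ ((kBasis K p a).repr c).support,
        monomial (expMod (p ^ a) μ) ((kBasis K p a) i : K)
          * (cartD a i (expMod (p ^ a) μ) (monomial μ c)) ^ p ^ a
        = monomial μ (((kBasis K p a).repr c i : K) * (kBasis K p a) i) := by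
      intro i _
      rw [cartD_monomial, if_pos rfl, monomial_pow, qRoot_spec, monomial_mul,
        exp_reconstruct, mul_comm]
    rw [Finset.sum_congr rfl hterm, ← map_sum (monomial μ)]
    congr 1
    have := (kBasis K p a).linearCombination_repr c
    rw [Finsupp.linearCombination_apply] at this
    exact this


end CartD2

section Descent
variable {K : Type*} [Field K] {p : ℕ} [Fact p.Prime] [CharP K p] {n β : ℕ}

lemma cartD_finset_sum (a : ℕ) (i : Module.Basis.ofVectorSpaceIndex ↥(frobSubfield K p a) K)
    (ν : Fin n →₀ ℕ) {ι : Type*} (s : Finset ι) (f : ι → MvPolynomial (Fin n) K) :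
    cartD a i ν (∑ j ∈ s, f j) = ∑ j ∈ s, cartD a i ν (f j) :=
  map_sum (AddMonoidHom.mk' (cartD a i ν) (cartD_add a i ν)) f s

lemma frob_descent (a : ℕ) (U : Matrix (Fin β) (Fin β) (MvPolynomial (Fin n) K))
    (B : Submodule (MvPolynomial (Fin n) K) (Fin β → MvPolynomial (Fin n) K))
    (c : Fin β → MvPolynomial (Fin n) K)
    (h : (U.map (· ^ p ^ a)).mulVec c ∈ bracketPower (p ^ a) B) :
    c ∈ bracketPower (p ^ a) (B.comap U.mulVecLin) := by
  classical
  obtain ⟨cf, hsupp, hsum⟩ := Submodule.mem_span_set.1 h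
  have hchoice : ∀ z ∈ cf.support, ∃ vv, vv ∈ B ∧ (fun i => vv i ^ p ^ a) = z := by
    intro z hz
    obtain ⟨vv, hvv, hvz⟩ := hsupp hz
    exact ⟨vv, hvv, hvz⟩
  choose! v hvB hvx using hchoice
  set T : Finset ((Module.Basis.ofVectorSpaceIndex ↥(frobSubfield K p a) K) × (Fin n →₀ ℕ)) :=
    (Finset.univ : Finset (Fin β)).biUnion (fun i => cartSupp a (c i)) with hTdef
  have hcov : ∀ i0 l, cartD a l.1 l.2 (c i0) ≠ 0 → l ∈ T := fun i0 l hne =>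
    Finset.mem_biUnion.2 ⟨i0, Finset.mem_univ _, cartD_ne_zero_mem a hne⟩
  have hc : ∀ i0, c i0 = ∑ l ∈ T,
      monomial l.2 ((kBasis K p a) l.1 : K) * (cartD a l.1 l.2 (c i0)) ^ p ^ a :=
    fun i0 => (sum_cartD a (c i0) T (hcov i0)).symm
  have hw : ∀ l : (Module.Basis.ofVectorSpaceIndex ↥(frobSubfield K p a) K) × (Fin n →₀ ℕ),
      (fun i => cartD a l.1 l.2 (c i)) ∈ B.comap U.mulVecLin := by
    intro l
    have hkey : U.mulVec (fun i => cartD a l.1 l.2 (c i))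
        = ∑ z ∈ cf.support, (cartD a l.1 l.2 (cf z)) • v z := by
      funext i0
      have h1 : cartD a l.1 l.2 ((∑ z ∈ cf.support, cf z • z) i0)
          = cartD a l.1 l.2 (((U.map (· ^ p ^ a)).mulVec c) i0) := by
        rw [← hsum]; rfl
      simp only [Finset.sum_apply, Pi.smul_apply, smul_eq_mul, Matrix.mulVec,
        dotProduct, Matrix.map_apply] at h1
      rw [cartD_finset_sum, cartD_finset_sum] at h1
      have h2 : ∀ z ∈ cf.support, cartD a l.1 l.2 (cf z * z i0)
          = v z i0 * cartD a l.1 l.2 (cf z) := by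
        intro z hz
        rw [← congrFun (hvx z hz) i0, mul_comm (cf z), cartD_pow_mul]
      have h3 : ∀ j2, cartD a l.1 l.2 (U i0 j2 ^ p ^ a * c j2)
          = U i0 j2 * cartD a l.1 l.2 (c j2) := fun j2 => cartD_pow_mul a l.1 l.2 _ _
      rw [Finset.sum_congr rfl h2, Finset.sum_congr rfl (fun j2 _ => h3 j2)] at h1
      simp only [Matrix.mulVec, dotProduct, Finset.sum_apply, Pi.smul_apply,
        smul_eq_mul]
      rw [← h1]
      exact Finset.sum_congr rfl fun z _ => mul_comm _ _
    rw [Submodule.mem_comap, Matrix.mulVecLin_apply, hkey]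
    exact Submodule.sum_smul_mem _ _ fun z hz => hvB z hz
  have hfinal : c = ∑ l ∈ T, (monomial l.2 ((kBasis K p a) l.1 : K))
      • (fun i => (cartD a l.1 l.2 (c i)) ^ p ^ a) := by
    funext i0
    rw [hc i0]
    simp only [Finset.sum_apply, Pi.smul_apply, smul_eq_mul]
  rw [hfinal]
  exact Submodule.sum_smul_mem _ _ fun l _ => mem_bp (p ^ a) (hw l)

end Descent

section Main
variable {K : Type*} [Field K] {p n β : ℕ} [Fact p.Prime] [CharP K p]

lemma V_succ_isLeast (U : Matrix (Fin β) (Fin β) (MvPolynomial (Fin n) K))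
    (V : ℕ → Submodule (MvPolynomial (Fin n) K) (Fin β → MvPolynomial (Fin n) K))
    (hV : ∀ e, 1 ≤ e →
      IsLeast {W : Submodule (MvPolynomial (Fin n) K) (Fin β → MvPolynomial (Fin n) K) |
        LinearMap.range (Matrix.mulVecLin (frobProd p U e)) ≤ bracketPower (p ^ e) W} (V e))
    (m : ℕ) (hm : 1 ≤ m) :
    IsLeast {W : Submodule (MvPolynomial (Fin n) K) (Fin β → MvPolynomial (Fin n) K) |
      Submodule.map U.mulVecLin (V m) ≤ bracketPower p W} (V (m + 1)) := by
  constructor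
  · show Submodule.map U.mulVecLin (V m) ≤ bracketPower p (V (m + 1))
    rw [Submodule.map_le_iff_le_comap]
    apply (hV m hm).2
    rintro _ ⟨x, rfl⟩
    apply frob_descent
    have h1 : (U.map (· ^ p ^ m)).mulVec ((frobProd p U m).mulVecLin x)
        = (frobProd p U (m + 1)).mulVecLin x := by
      show _ = ((U.map (· ^ p ^ m)) * frobProd p U m).mulVecLin x
      rw [Matrix.mulVecLin_mul]
      rfl
    rw [h1]
    have h2 : (frobProd p U (m + 1)).mulVecLin x ∈ bracketPower (p ^ (m + 1)) (V (m + 1)) :=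
      (hV (m + 1) (le_trans hm (Nat.le_succ m))).1 ⟨x, rfl⟩
    have h3 : bracketPower (p ^ (m + 1)) (V (m + 1))
        ≤ bracketPower (p ^ m) (bracketPower p (V (m + 1))) := by
      have := bp_bp_le (T := MvPolynomial (Fin n) K) (β := β) p (p ^ m) (V (m + 1))
      rwa [show p * p ^ m = p ^ (m + 1) by rw [pow_succ, mul_comm]] at this
    exact h3 h2
  · intro W hW
    apply (hV (m + 1) (le_trans hm (Nat.le_succ m))).2
    rintro _ ⟨x, rfl⟩
    have h2 : (frobProd p U m).mulVecLin x ∈ bracketPower (p ^ m) (V m) :=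
      (hV m hm).1 ⟨x, rfl⟩
    have h3 : (frobProd p U (m + 1)).mulVecLin x
        = (U.map (· ^ p ^ m)).mulVecLin ((frobProd p U m).mulVecLin x) := by
      show ((U.map (· ^ p ^ m)) * frobProd p U m).mulVecLin x = _
      rw [Matrix.mulVecLin_mul]
      rfl
    rw [h3]
    have h4 : (U.map (· ^ p ^ m)).mulVecLin ((frobProd p U m).mulVecLin x)
        ∈ Submodule.map (U.map (· ^ p ^ m)).mulVecLin (bracketPower (p ^ m) (V m)) :=
      Submodule.mem_map_of_mem h2
    have h5 := map_bp p m U (V m) h4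
    have h6 : bracketPower (p ^ m) (Submodule.map U.mulVecLin (V m))
        ≤ bracketPower (p ^ m) (bracketPower p W) := bp_mono _ hW
    have h7 := bp_bp_ge p m p W
    rw [show p * p ^ m = p ^ (m + 1) by rw [pow_succ, mul_comm]] at h7
    exact h7 (h6 h5)

end Main

/-- Over `R = K[x₁,…,xₙ]` with `K` a field of prime characteristic `p`:
let `U` be a `β×β` matrix over `R` and for `e ≥ 1` let `V e` be the smallest submodule such
that the column span of `U^{[p^{e-1}]}·⋯·U^{[p]}·U` is contained in `(V e)^{[p^e]}`.
If `V e = V (e+1)` for some `e ≥ 1`, then `V (e+j) = V e` for all `j ≥ 0`. -/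
theorem Ve_stabilizes_of_consecutive_eq
    {K : Type*} [Field K] {p n β : ℕ} (hp : p.Prime) [CharP K p]
    (U : Matrix (Fin β) (Fin β) (MvPolynomial (Fin n) K))
    (V : ℕ → Submodule (MvPolynomial (Fin n) K) (Fin β → MvPolynomial (Fin n) K))
    (hV : ∀ e, 1 ≤ e →
      IsLeast {W : Submodule (MvPolynomial (Fin n) K) (Fin β → MvPolynomial (Fin n) K) |
        LinearMap.range (Matrix.mulVecLin (frobProd p U e)) ≤ bracketPower (p ^ e) W} (V e))
    (e : ℕ) (he : 1 ≤ e) (heq : V e = V (e + 1)) :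
    ∀ j : ℕ, V (e + j) = V e := by
  haveI := Fact.mk hp
  have huniq : ∀ m₁ m₂, 1 ≤ m₁ → 1 ≤ m₂ → V m₁ = V m₂ → V (m₁ + 1) = V (m₂ + 1) := by
    intro m₁ m₂ h₁ h₂ hEq
    have A := V_succ_isLeast U V hV m₁ h₁
    have B := V_succ_isLeast U V hV m₂ h₂
    rw [hEq] at A
    exact A.unique B
  intro j
  induction j with
  | zero => rfl
  | succ j ih =>
    have h1 : V ((e + j) + 1) = V (e + 1) :=
      huniq (e + j) e (le_trans he (Nat.le_add_right e j)) he ih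
    have h2 : e + (j + 1) = (e + j) + 1 := by omega
    rw [h2, h1, ← heq]
end

section
/- Let U be a β×β matrix over R and for e ≥ 1 let V_e ⊆ R^β be the smallest submodule such that the column span of the matrix product U^{[p^{e-1}]}·U^{[p^{e-2}]}·⋯·U^{[p]}·U is contained in (V_e)^{[p^e]}. Then there exists an integer e ≥ 1 such that V_{e+j} = V_e for all j ≥ 0. -/
set_option linter.unusedVariables false
set_option linter.unusedSectionVars false
set_option maxHeartbeats 1000000

namespace KatzAux


def Tw (p e : ℕ) (A : Type*) : Type _ := A

namespace Tw

variable {A : Type*}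

def of (p e : ℕ) (a : A) : Tw p e A := a
def un (p e : ℕ) (a : Tw p e A) : A := a

instance (p e : ℕ) [AddCommMonoid A] : AddCommMonoid (Tw p e A) :=
  inferInstanceAs (AddCommMonoid A)

instance (p e : ℕ) [AddCommGroup A] : AddCommGroup (Tw p e A) :=
  inferInstanceAs (AddCommGroup A)

noncomputable instance (p e : ℕ) [CommSemiring A] [ExpChar A p] : Module A (Tw p e A) :=
  Module.compHom A (iterateFrobenius A p e)

variable (p e : ℕ) [CommSemiring A] [ExpChar A p]

@[simp] lemma un_of (a : A) : un p e (of p e a) = a := rfl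
@[simp] lemma of_un (a : Tw p e A) : of p e (un p e a) = a := rfl
@[simp] lemma un_add (a b : Tw p e A) : un p e (a + b) = un p e a + un p e b := rfl
@[simp] lemma un_zero : un p e (0 : Tw p e A) = 0 := rfl
@[simp] lemma un_smul (r : A) (x : Tw p e A) :
    un p e (r • x) = r ^ p ^ e * un p e x := by
  show iterateFrobenius A p e r * un p e x = _
  rw [iterateFrobenius_def]

lemma un_sum {ι : Type*} (s : Finset ι) (f : ι → Tw p e A) :
    un p e (∑ i ∈ s, f i) = ∑ i ∈ s, un p e (f i) := rfl

lemma un_injective : Function.Injective (un p e (A := A)) := fun _ _ h => h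

end Tw

/-! ### Coefficients of `p^e`-th powers in `MvPolynomial` -/

section Coeff

variable {K : Type*} [Field K] {p : ℕ} [Fact p.Prime] [CharP K p] {n : ℕ}

lemma pow_expand (e : ℕ) (f : MvPolynomial (Fin n) K) :
    f ^ p ^ e = ∑ τ ∈ f.support, MvPolynomial.monomial (p ^ e • τ) (f.coeff τ ^ p ^ e) := by
  rw [show f ^ p ^ e = iterateFrobenius (MvPolynomial (Fin n) K) p e f from
    (iterateFrobenius_def p e f).symm]
  conv_lhs => rw [MvPolynomial.as_sum f]
  rw [map_sum]
  refine Finset.sum_congr rfl fun τ _ => ?_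
  rw [iterateFrobenius_def, MvPolynomial.monomial_pow]

lemma smul_cancel {τ' τ : Fin n →₀ ℕ} (hp0 : 0 < p) (e : ℕ) (h : p ^ e • τ' = p ^ e • τ) :
    τ' = τ := by
  ext i
  have := congrArg (fun g : Fin n →₀ ℕ => g i) h
  simp only [Finsupp.smul_apply, smul_eq_mul] at this
  exact Nat.eq_of_mul_eq_mul_left (pow_pos hp0 e) this

lemma coeff_pow_smul (e : ℕ) (f : MvPolynomial (Fin n) K) (τ : Fin n →₀ ℕ) :
    (f ^ p ^ e).coeff (p ^ e • τ) = f.coeff τ ^ p ^ e := by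
  classical
  have hp : p.Prime := Fact.out
  rw [pow_expand, MvPolynomial.coeff_sum]
  by_cases hτ : τ ∈ f.support
  · rw [Finset.sum_eq_single τ]
    · rw [MvPolynomial.coeff_monomial, if_pos rfl]
    · intro τ' _ hne
      rw [MvPolynomial.coeff_monomial, if_neg fun h => hne (smul_cancel hp.pos e h)]
    · exact fun h => (h hτ).elim
  · have h0 : f.coeff τ = 0 := MvPolynomial.notMem_support_iff.mp hτ
    rw [h0, zero_pow (pow_ne_zero e hp.ne_zero)]
    apply Finset.sum_eq_zero
    intro τ' hτ'
    rw [MvPolynomial.coeff_monomial, if_neg]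
    intro h
    exact hτ (smul_cancel hp.pos e h ▸ hτ')

lemma coeff_pow_eq_zero {e : ℕ} {f : MvPolynomial (Fin n) K} {σ' : Fin n →₀ ℕ} (k : Fin n)
    (hk : ¬ p ^ e ∣ σ' k) : (f ^ p ^ e).coeff σ' = 0 := by
  rw [pow_expand, MvPolynomial.coeff_sum]
  apply Finset.sum_eq_zero
  intro τ' _
  rw [MvPolynomial.coeff_monomial, if_neg]
  rintro rfl
  exact hk ⟨τ' k, by simp⟩

end Coeff


/-! ### A basis of `K` over its subfield of `p^e`-th powers -/

section KBasis

variable (K : Type*) [Field K] (p : ℕ) [Fact p.Prime] [CharP K p]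

noncomputable def kIdx (e : ℕ) : Set (Tw p e K) := Module.Basis.ofVectorSpaceIndex K (Tw p e K)

noncomputable def kBasis (e : ℕ) : Module.Basis (kIdx K p e) K (Tw p e K) :=
  Module.Basis.ofVectorSpace K (Tw p e K)

lemma kq_indep (e : ℕ) (t : Finset (kIdx K p e)) (c : kIdx K p e → K)
    (h : ∑ b ∈ t, c b ^ p ^ e * Tw.un p e (b : Tw p e K) = 0) : ∀ b ∈ t, c b = 0 := by
  have hli := (kBasis K p e).linearIndependent
  rw [linearIndependent_iff'] at hli
  refine hli t c ?_
  refine Tw.un_injective p e ?_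
  rw [Tw.un_sum, Tw.un_zero]
  rw [← h]
  refine Finset.sum_congr rfl fun b _ => ?_
  rw [show kBasis K p e b = (b : Tw p e K) from Module.Basis.ofVectorSpace_apply_self K _ b]
  rw [Tw.un_smul]

end KBasis

/-! ### The basis of `K[x]` over its `p^e`-th powers -/

section MBasis

def mu (p e n : ℕ) : Type := {μ : Fin n →₀ ℕ // ∀ i, μ i < p ^ e}

variable (K : Type*) [Field K] (p : ℕ) [Fact p.Prime] [CharP K p] (e n : ℕ)

def mIdx : Type _ := kIdx K p e × mu p e n

noncomputable def mVec (i : mIdx K p e n) : Tw p e (MvPolynomial (Fin n) K) :=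
  Tw.of p e (MvPolynomial.monomial i.2.1 (Tw.un p e (i.1 : Tw p e K)))

variable {K p n e}

lemma coeff_term [DecidableEq (mu p e n)] (g : MvPolynomial (Fin n) K)
    (i : mIdx K p e n) (τ : Fin n →₀ ℕ) (μ₀ : mu p e n) :
    (Tw.un p e (g • mVec K p e n i)).coeff (p ^ e • τ + μ₀.1)
      = if i.2 = μ₀ then g.coeff τ ^ p ^ e * Tw.un p e (i.1 : Tw p e K) else 0 := by
  classical
  have hp : p.Prime := Fact.out
  rw [mVec, Tw.un_smul, Tw.un_of, MvPolynomial.coeff_mul_monomial']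
  by_cases hμ : i.2 = μ₀
  · rw [if_pos hμ, hμ, if_pos (le_add_self : μ₀.1 ≤ p ^ e • τ + μ₀.1),
      add_tsub_cancel_right, coeff_pow_smul]
  · rw [if_neg hμ]
    by_cases hle : i.2.1 ≤ p ^ e • τ + μ₀.1
    · rw [if_pos hle]
      -- find a coordinate where they differ
      have hne : ∃ k, i.2.1 k ≠ μ₀.1 k := by
        by_contra hc
        push_neg at hc
        exact hμ (Subtype.ext (Finsupp.ext hc))
      obtain ⟨k, hk⟩ := hne
      rw [mul_eq_zero]
      left
      refine coeff_pow_eq_zero k ?_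
      rw [Finsupp.tsub_apply, Finsupp.add_apply, Finsupp.smul_apply, smul_eq_mul]
      have h1 : i.2.1 k ≤ p ^ e * τ k + μ₀.1 k := by
        have := (Finsupp.le_def.mp hle) k
        simpa using this
      have h2 : μ₀.1 k < p ^ e := μ₀.2 k
      have h3 : i.2.1 k < p ^ e := i.2.2 k
      rintro ⟨c, hc⟩
      -- p^e * τ k + μ₀ k - i k = p^e * c
      have key : (p ^ e * c + i.2.1 k) % p ^ e = (p ^ e * τ k + μ₀.1 k) % p ^ e := by
        rw [← hc, Nat.sub_add_cancel h1]
      have k1 : (p ^ e * c + i.2.1 k) % p ^ e = i.2.1 k := by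
        rw [add_comm, Nat.add_mul_mod_self_left, Nat.mod_eq_of_lt h3]
      have k2 : (p ^ e * τ k + μ₀.1 k) % p ^ e = μ₀.1 k := by
        rw [add_comm, Nat.add_mul_mod_self_left, Nat.mod_eq_of_lt h2]
      rw [k1, k2] at key
      exact hk key
    · rw [if_neg hle]

lemma coeff_twsum (s : Finset (mIdx K p e n)) (g : mIdx K p e n → MvPolynomial (Fin n) K)
    (τ : Fin n →₀ ℕ) (μ₀ : mu p e n) [DecidableEq (mu p e n)] :
    (Tw.un p e (∑ i ∈ s, g i • mVec K p e n i)).coeff (p ^ e • τ + μ₀.1)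
      = ∑ i ∈ s.filter (fun i => i.2 = μ₀),
          (g i).coeff τ ^ p ^ e * Tw.un p e (i.1 : Tw p e K) := by
  classical
  rw [Tw.un_sum, MvPolynomial.coeff_sum, Finset.sum_filter]
  exact Finset.sum_congr rfl fun i _ => coeff_term (g i) i τ μ₀

lemma twsum_coeff_eq_zero (s : Finset (mIdx K p e n))
    (g : mIdx K p e n → MvPolynomial (Fin n) K) (τ : Fin n →₀ ℕ) (i₀ : mIdx K p e n)
    (hi : i₀ ∈ s)
    (h0 : (Tw.un p e (∑ i ∈ s, g i • mVec K p e n i)).coeff (p ^ e • τ + i₀.2.1) = 0) :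
    (g i₀).coeff τ = 0 := by
  classical
  have hp : p.Prime := Fact.out
  rw [coeff_twsum s g τ i₀.2] at h0
  set t := s.filter (fun i => i.2 = i₀.2) with ht
  have hcong : ∑ i ∈ t, (g i).coeff τ ^ p ^ e * Tw.un p e (i.1 : Tw p e K)
      = ∑ i ∈ t, (g (i.1, i₀.2)).coeff τ ^ p ^ e * Tw.un p e (i.1 : Tw p e K) := by
    refine Finset.sum_congr rfl fun i hi' => ?_
    have h2 : i.2 = i₀.2 := (Finset.mem_filter.mp hi').2
    have h3 : (i.1, i₀.2) = i := by rw [← h2]; exact Prod.mk.eta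
    rw [h3]

  rw [hcong] at h0
  have hinj : ∀ x ∈ t, ∀ y ∈ t, x.1 = y.1 → x = y := by
    intro x hx y hy hxy
    have h2x : x.2 = i₀.2 := (Finset.mem_filter.mp hx).2
    have h2y : y.2 = i₀.2 := (Finset.mem_filter.mp hy).2
    exact Prod.ext hxy (h2x.trans h2y.symm)
  have h0' := (Finset.sum_image (f := fun b : kIdx K p e =>
      (g (b, i₀.2)).coeff τ ^ p ^ e * Tw.un p e (b : Tw p e K)) hinj).trans h0
  have := kq_indep K p e (t.image Prod.fst) (fun b => (g (b, i₀.2)).coeff τ) h0' i₀.1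
    (Finset.mem_image.mpr ⟨i₀, Finset.mem_filter.mpr ⟨hi, rfl⟩, rfl⟩)
  exact this

end MBasis


section MBasis2

variable (K : Type*) [Field K] (p : ℕ) [Fact p.Prime] [CharP K p] (e n : ℕ)

lemma kBasis_apply (b : kIdx K p e) : kBasis K p e b = (b : Tw p e K) :=
  Module.Basis.ofVectorSpace_apply_self K _ b

lemma mVec_li : LinearIndependent (MvPolynomial (Fin n) K) (mVec K p e n) := by
  classical
  rw [linearIndependent_iff']
  intro s g h i hi
  refine MvPolynomial.ext _ _ fun τ => ?_
  rw [MvPolynomial.coeff_zero]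
  exact twsum_coeff_eq_zero s g τ i hi
    (by rw [h, Tw.un_zero, MvPolynomial.coeff_zero])

lemma mVec_span :
    ⊤ ≤ Submodule.span (MvPolynomial (Fin n) K) (Set.range (mVec K p e n)) := by
  classical
  have hp : p.Prime := Fact.out
  have main : ∀ f : MvPolynomial (Fin n) K,
      Tw.of p e f ∈ Submodule.span (MvPolynomial (Fin n) K) (Set.range (mVec K p e n)) := by
    intro f
    induction f using MvPolynomial.induction_on' with
    | add f g hf hg => exact Submodule.add_mem _ hf hg
    | monomial u a =>
      set τ : Fin n →₀ ℕ := u.mapRange (· / p ^ e) (Nat.zero_div _) with hτ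
      set μ : Fin n →₀ ℕ := u.mapRange (· % p ^ e) (Nat.zero_mod _) with hμdef
      have hμlt : ∀ i, μ i < p ^ e := by
        intro i; rw [hμdef, Finsupp.mapRange_apply]
        exact Nat.mod_lt _ (pow_pos hp.pos e)
      have hu : p ^ e • τ + μ = u := by
        ext i
        simp only [Finsupp.add_apply, Finsupp.smul_apply, smul_eq_mul, hτ, hμdef,
          Finsupp.mapRange_apply]
        exact Nat.div_add_mod _ _
      set B := kBasis K p e with hB
      set xa := Tw.of p e a with hxa
      set c := B.repr xa with hc
      have hsum : ∑ b' ∈ c.support, c b' • B b' = xa := by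
        have h1 := B.linearCombination_repr xa
        rwa [Finsupp.linearCombination_apply, Finsupp.sum] at h1
      have E1 : Tw.of p e (MvPolynomial.monomial u a)
          = ∑ b' ∈ c.support,
              (MvPolynomial.monomial τ (c b')) • mVec K p e n (b', ⟨μ, hμlt⟩) := by
        refine Tw.un_injective p e ?_
        rw [Tw.un_sum, Tw.un_of]
        have hterm : ∀ b' ∈ c.support,
            Tw.un p e ((MvPolynomial.monomial τ (c b')) • mVec K p e n (b', ⟨μ, hμlt⟩))
            = MvPolynomial.monomial u ((c b') ^ p ^ e * Tw.un p e (b' : Tw p e K)) := by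
          intro b' _
          rw [show mVec K p e n (b', ⟨μ, hμlt⟩) = Tw.of p e (MvPolynomial.monomial μ
              (Tw.un p e (b' : Tw p e K))) from rfl, Tw.un_smul, Tw.un_of, MvPolynomial.monomial_pow,
            MvPolynomial.monomial_mul, hu]
        rw [Finset.sum_congr rfl hterm, ← map_sum]
        congr 1
        have h2 := congrArg (Tw.un p e) hsum
        rw [Tw.un_sum, Tw.un_of] at h2
        rw [← h2]
        refine Finset.sum_congr rfl fun b' _ => ?_
        rw [Tw.un_smul, kBasis_apply]
      rw [E1]
      exact Submodule.sum_mem _ fun b' _ => Submodule.smul_mem _ _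
        (Submodule.subset_span ⟨(b', ⟨μ, hμlt⟩), rfl⟩)
  intro f _
  exact main f

noncomputable def frobBasis : Module.Basis (mIdx K p e n) (MvPolynomial (Fin n) K)
    (Tw p e (MvPolynomial (Fin n) K)) :=
  Module.Basis.mk (mVec_li K p e n) (mVec_span K p e n)

lemma frobBasis_apply (i : mIdx K p e n) : frobBasis K p e n i = mVec K p e n i :=
  Module.Basis.mk_apply _ _ _

end MBasis2

section Comp

variable {K : Type*} [Field K] {p : ℕ} [Fact p.Prime] [CharP K p] {e n : ℕ}

noncomputable def comp (i : mIdx K p e n) (f : MvPolynomial (Fin n) K) :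
    MvPolynomial (Fin n) K :=
  (frobBasis K p e n).repr (Tw.of p e f) i

lemma comp_q_mul (i : mIdx K p e n) (g f : MvPolynomial (Fin n) K) :
    comp i (g ^ p ^ e * f) = g * comp i f := by
  have h1 : Tw.of p e (g ^ p ^ e * f) = g • Tw.of p e f := by
    refine Tw.un_injective p e ?_
    rw [Tw.un_smul, Tw.un_of, Tw.un_of]
  rw [comp, h1, map_smul]
  simp [comp, Finsupp.smul_apply, smul_eq_mul]

lemma comp_spec (f : MvPolynomial (Fin n) K) :
    ∑ j ∈ ((frobBasis K p e n).repr (Tw.of p e f)).support,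
      comp j f • mVec K p e n j = Tw.of p e f := by
  have h1 := (frobBasis K p e n).linearCombination_repr (Tw.of p e f)
  rw [Finsupp.linearCombination_apply, Finsupp.sum] at h1
  refine Eq.trans (Finset.sum_congr rfl fun j _ => ?_) h1
  rw [frobBasis_apply]
  rfl

lemma comp_totalDegree (f : MvPolynomial (Fin n) K) (i : mIdx K p e n)
    (h : comp i f ≠ 0) :
    p ^ e * (comp i f).totalDegree ≤ f.totalDegree := by
  classical
  obtain ⟨τ, hτmem, hτ⟩ := Finset.exists_mem_eq_sup (comp i f).support
      (MvPolynomial.support_nonempty.mpr h) (fun s : Fin n →₀ ℕ => s.sum fun _ m => m)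
  have hτdeg : (comp i f).totalDegree = τ.sum fun _ m => m := hτ
  have hcoeff : f.coeff (p ^ e • τ + i.2.1) ≠ 0 := by
    intro h0
    refine (MvPolynomial.mem_support_iff.mp hτmem) ?_
    refine twsum_coeff_eq_zero (((frobBasis K p e n).repr (Tw.of p e f)).support)
        (fun j => comp j f) τ i (Finsupp.mem_support_iff.mpr h) ?_
    rw [comp_spec, Tw.un_of]
    exact h0
  have hmem : (p ^ e • τ + i.2.1) ∈ f.support := MvPolynomial.mem_support_iff.mpr hcoeff
  have h1 : ((p ^ e • τ + i.2.1).sum fun _ m => m) ≤ f.totalDegree :=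
    MvPolynomial.le_totalDegree hmem
  have h2 : ∀ σ' : Fin n →₀ ℕ, (σ'.sum fun _ m => m) = ∑ k, σ' k :=
    fun σ' => Finsupp.sum_fintype _ _ fun _ => rfl
  rw [hτdeg, h2 τ]
  calc p ^ e * ∑ k, τ k = ∑ k, p ^ e * τ k := by rw [Finset.mul_sum]
    _ ≤ ∑ k : Fin n, (p ^ e • τ + i.2.1) k := by
        refine Finset.sum_le_sum fun k _ => ?_
        rw [Finsupp.add_apply, Finsupp.smul_apply, smul_eq_mul]
        exact Nat.le_add_right _ _
    _ = ((p ^ e • τ + i.2.1).sum fun _ m => m) := (h2 _).symm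
    _ ≤ f.totalDegree := h1



lemma comp_add (i : mIdx K p e n) (f g : MvPolynomial (Fin n) K) :
    comp i (f + g) = comp i f + comp i g := by
  have h1 : Tw.of p e (f + g) = Tw.of p e f + Tw.of p e g := rfl
  rw [comp, h1, map_add]
  rfl

lemma comp_zero (i : mIdx K p e n) : comp i (0 : MvPolynomial (Fin n) K) = 0 := by
  have h1 : Tw.of p e (0 : MvPolynomial (Fin n) K) = 0 := rfl
  rw [comp, h1, map_zero]
  rfl

end Comp

section Vector

variable {K : Type*} [Field K] {p : ℕ} [Fact p.Prime] [CharP K p] {n β : ℕ}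

lemma range_mulVecLin_le_iff (M : Matrix (Fin β) (Fin β) (MvPolynomial (Fin n) K))
    (N : Submodule (MvPolynomial (Fin n) K) (Fin β → MvPolynomial (Fin n) K)) :
    LinearMap.range M.mulVecLin ≤ N ↔ ∀ j, (fun i => M i j) ∈ N := by
  rw [Matrix.range_mulVecLin, Submodule.span_le]
  constructor
  · intro h j; exact h ⟨j, rfl⟩
  · rintro h _ ⟨j, rfl⟩; exact h j

lemma pow_mem_bracketPower {L : Submodule (MvPolynomial (Fin n) K)
      (Fin β → MvPolynomial (Fin n) K)} (e : ℕ) {v : Fin β → MvPolynomial (Fin n) K}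
    (hv : v ∈ bracketPower (p ^ e) L) :
    (fun i => v i ^ p) ∈ bracketPower (p ^ (e + 1)) L := by
  have hp : p.Prime := Fact.out
  induction hv using Submodule.span_induction with
  | mem x hx =>
      obtain ⟨w, hw, rfl⟩ := hx
      refine Submodule.subset_span ⟨w, hw, ?_⟩
      funext i
      rw [← pow_mul, ← pow_succ]
  | zero =>
      have h0 : (fun i => (0 : Fin β → MvPolynomial (Fin n) K) i ^ p)
          = (0 : Fin β → MvPolynomial (Fin n) K) := by
        funext i
        exact zero_pow hp.ne_zero
      rw [h0]
      exact Submodule.zero_mem _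
  | add x y hx hy ihx ihy =>
      have h0 : (fun i => (x + y) i ^ p) = (fun i => x i ^ p) + fun i => y i ^ p := by
        funext i
        rw [Pi.add_apply, Pi.add_apply]
        exact add_pow_char _ _ _
      rw [h0]
      exact Submodule.add_mem _ ihx ihy
  | smul r x hx ihx =>
      have h0 : (fun i => (r • x) i ^ p) = r ^ p • fun i => x i ^ p := by
        funext i
        rw [Pi.smul_apply, Pi.smul_apply, smul_eq_mul, smul_eq_mul, mul_pow]
      rw [h0]
      exact Submodule.smul_mem _ _ ihx

lemma bracketPower_degree_refine
    (L : Submodule (MvPolynomial (Fin n) K) (Fin β → MvPolynomial (Fin n) K))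
    (D e : ℕ) (v : Fin β → MvPolynomial (Fin n) K)
    (hv : v ∈ bracketPower (p ^ e) L)
    (hdeg : ∀ i, (v i).totalDegree ≤ p ^ e * D) :
    v ∈ bracketPower (p ^ e) (Submodule.span (MvPolynomial (Fin n) K)
      {w : Fin β → MvPolynomial (Fin n) K | w ∈ L ∧ ∀ i, (w i).totalDegree ≤ D}) := by
  classical
  have hp : p.Prime := Fact.out
  -- all twisted components of all scalar multiples lie in L
  have hcompL : ∀ v' ∈ bracketPower (p ^ e) L, ∀ (r : MvPolynomial (Fin n) K)
      (i : mIdx K p e n), (fun j => comp i (r * v' j)) ∈ L := by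
    intro v' hv'
    induction hv' using Submodule.span_induction with
    | mem x hx =>
        obtain ⟨w, hw, rfl⟩ := hx
        intro r i
        have h0 : (fun j => comp i (r * w j ^ p ^ e)) = (comp i r) • w := by
          funext j
          rw [mul_comm, comp_q_mul, Pi.smul_apply, smul_eq_mul, mul_comm]
        rw [h0]
        exact Submodule.smul_mem _ _ hw
    | zero =>
        intro r i
        have h0 : (fun j => comp i (r * (0 : Fin β → MvPolynomial (Fin n) K) j)) = 0 := by
          funext j
          rw [Pi.zero_apply, mul_zero, comp_zero]
        rw [h0]
        exact Submodule.zero_mem _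
    | add x y hx hy ihx ihy =>
        intro r i
        have h0 : (fun j => comp i (r * (x + y) j))
            = (fun j => comp i (r * x j)) + fun j => comp i (r * y j) := by
          funext j
          rw [Pi.add_apply, Pi.add_apply, mul_add, comp_add]
        rw [h0]
        exact L.add_mem (ihx r i) (ihy r i)
    | smul a x hx ihx =>
        intro r i
        have h0 : (fun j => comp i (r * (a • x) j)) = fun j => comp i ((r * a) * x j) := by
          funext j
          rw [Pi.smul_apply, smul_eq_mul, mul_assoc]
        rw [h0]
        exact ihx (r * a) i
  -- assemble
  set S : Finset (mIdx K p e n) := Finset.univ.biUnion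
    (fun j : Fin β => ((frobBasis K p e n).repr (Tw.of p e (v j))).support) with hS
  have E2 : v = ∑ i ∈ S, Tw.un p e (mVec K p e n i) • fun j => comp i (v j) ^ p ^ e := by
    funext j'
    rw [Finset.sum_apply]
    have hstep : ∀ i ∈ S, (Tw.un p e (mVec K p e n i) • fun j => comp i (v j) ^ p ^ e) j'
        = Tw.un p e (mVec K p e n i) * comp i (v j') ^ p ^ e := by
      intro i _
      rw [Pi.smul_apply, smul_eq_mul]
    rw [Finset.sum_congr rfl hstep]
    have hsub : ((frobBasis K p e n).repr (Tw.of p e (v j'))).support ⊆ S :=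
      fun i hi => Finset.mem_biUnion.mpr ⟨j', Finset.mem_univ _, hi⟩
    have hzero : ∀ i ∈ S, i ∉ ((frobBasis K p e n).repr (Tw.of p e (v j'))).support →
        Tw.un p e (mVec K p e n i) * comp i (v j') ^ p ^ e = 0 := by
      intro i _ hni
      have hc0 : comp i (v j') = 0 := by
        by_contra hc
        exact hni (Finsupp.mem_support_iff.mpr hc)
      rw [hc0, zero_pow (pow_ne_zero e hp.ne_zero), mul_zero]
    have h5 : ∑ i ∈ ((frobBasis K p e n).repr (Tw.of p e (v j'))).support,
        Tw.un p e (mVec K p e n i) * comp i (v j') ^ p ^ e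
        = ∑ i ∈ S, Tw.un p e (mVec K p e n i) * comp i (v j') ^ p ^ e :=
      Finset.sum_subset hsub hzero
    rw [← h5]
    have h4 := congrArg (Tw.un p e) (comp_spec (v j'))
    rw [Tw.un_sum, Tw.un_of] at h4
    conv_lhs => rw [← h4]
    refine Finset.sum_congr rfl fun i _ => ?_
    rw [Tw.un_smul, mul_comm]
  rw [E2]
  refine Submodule.sum_mem _ fun i _ => Submodule.smul_mem _ _ ?_
  have hCL : (fun j => comp i (v j)) ∈ L := by
    have h5 := hcompL v hv 1 i
    simpa [one_mul] using h5
  have hCdeg : ∀ j, (comp i (v j)).totalDegree ≤ D := by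
    intro j
    by_cases hc : comp i (v j) = 0
    · rw [hc, MvPolynomial.totalDegree_zero]
      exact Nat.zero_le _
    · have h6 := comp_totalDegree (v j) i hc
      have h7 := le_trans h6 (hdeg j)
      exact Nat.le_of_mul_le_mul_left h7 (pow_pos hp.pos e)
  exact Submodule.subset_span ⟨_, Submodule.subset_span ⟨hCL, hCdeg⟩, rfl⟩

end Vector


section MatrixLemmas

variable {K : Type*} [Field K] {p : ℕ} [Fact p.Prime] [CharP K p] {n β : ℕ}

lemma frobProd_succ_right (U : Matrix (Fin β) (Fin β) (MvPolynomial (Fin n) K)) (e : ℕ) :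
    frobProd p U (e + 1) = ((frobProd p U e).map (· ^ p)) * U := by
  have hp : p.Prime := Fact.out
  have hmapmul : ∀ A B : Matrix (Fin β) (Fin β) (MvPolynomial (Fin n) K),
      (A * B).map (· ^ p) = (A.map (· ^ p)) * (B.map (· ^ p)) := by
    intro A B
    have hfr : (fun x : MvPolynomial (Fin n) K => x ^ p)
        = ⇑(frobenius (MvPolynomial (Fin n) K) p) := rfl
    rw [hfr]
    exact Matrix.map_mul
  induction e with
  | zero =>
      show (U.map (· ^ p ^ 0)) * 1 = ((1 : Matrix (Fin β) (Fin β) _).map (· ^ p)) * U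
      have h1 : U.map (· ^ p ^ 0) = U := by
        ext i j
        simp [Matrix.map_apply]
      have h2 : (1 : Matrix (Fin β) (Fin β) (MvPolynomial (Fin n) K)).map (· ^ p) = 1 := by
        ext i j
        by_cases h : i = j <;>
          simp [Matrix.map_apply, Matrix.one_apply, h, one_pow, zero_pow hp.ne_zero]
      rw [h1, h2, mul_one, one_mul]
  | succ e ih =>
      show (U.map (· ^ p ^ (e + 1))) * frobProd p U (e + 1)
          = ((U.map (· ^ p ^ e) * frobProd p U e).map (· ^ p)) * U
      rw [ih, hmapmul]
      have hcomp : (U.map (· ^ p ^ e)).map (· ^ p) = U.map (· ^ p ^ (e + 1)) := by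
        rw [Matrix.map_map]
        refine Matrix.ext fun i j => ?_
        show (U i j ^ p ^ e) ^ p = U i j ^ p ^ (e + 1)
        rw [← pow_mul, ← pow_succ]
      rw [hcomp, Matrix.mul_assoc]

lemma frobProd_deg (U : Matrix (Fin β) (Fin β) (MvPolynomial (Fin n) K)) (d : ℕ)
    (hU : ∀ i j, (U i j).totalDegree ≤ d) (e : ℕ) :
    ∀ i j, ((frobProd p U e) i j).totalDegree ≤ d * (p ^ e - 1) := by
  have hp : p.Prime := Fact.out
  induction e with
  | zero =>
      intro i j
      show ((1 : Matrix (Fin β) (Fin β) (MvPolynomial (Fin n) K)) i j).totalDegree ≤ _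
      by_cases h : i = j <;>
        simp [Matrix.one_apply, h, MvPolynomial.totalDegree_one, MvPolynomial.totalDegree_zero]
  | succ e ih =>
      intro i j
      show ((U.map (· ^ p ^ e) * frobProd p U e) i j).totalDegree ≤ _
      rw [Matrix.mul_apply]
      refine le_trans (MvPolynomial.totalDegree_finset_sum _ _) ?_
      rw [Finset.sup_le_iff]
      intro k _
      refine le_trans (MvPolynomial.totalDegree_mul _ _) ?_
      have h1 : ((U.map (· ^ p ^ e)) i k).totalDegree ≤ p ^ e * d := by
        show ((U i k ^ p ^ e)).totalDegree ≤ _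
        refine le_trans (MvPolynomial.totalDegree_pow _ _) ?_
        exact Nat.mul_le_mul_left _ (hU i k)
      have h2 := ih k j
      have hpe : 1 ≤ p ^ e := Nat.one_le_pow _ _ hp.pos
      have hp2 : 2 ≤ p := hp.two_le
      have key : p ^ e + (p ^ e - 1) ≤ p ^ (e + 1) - 1 := by
        have h3 : 2 * p ^ e ≤ p * p ^ e := Nat.mul_le_mul_right _ hp2
        have h4 : p ^ (e + 1) = p * p ^ e := by
          rw [pow_succ, Nat.mul_comm]
        omega
      calc ((U.map (· ^ p ^ e)) i k).totalDegree + ((frobProd p U e) k j).totalDegree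
          ≤ p ^ e * d + d * (p ^ e - 1) := Nat.add_le_add h1 h2
        _ = d * (p ^ e + (p ^ e - 1)) := by ring
        _ ≤ d * (p ^ (e + 1) - 1) := Nat.mul_le_mul_left d key

end MatrixLemmas

end KatzAux

/-- Over `R = K[x₁,…,xₙ]` with `K` a field of prime characteristic `p`:
let `U` be a `β×β` matrix over `R` and for `e ≥ 1` let `V e` be the smallest submodule such
that the column span of `U^{[p^{e-1}]}·⋯·U^{[p]}·U` is contained in `(V e)^{[p^e]}`.
Then there exists `e ≥ 1` such that `V (e+j) = V e` for all `j ≥ 0`. -/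
theorem Ve_eventually_stabilizes
    {K : Type*} [Field K] {p n β : ℕ} (hp : p.Prime) [CharP K p]
    (U : Matrix (Fin β) (Fin β) (MvPolynomial (Fin n) K))
    (V : ℕ → Submodule (MvPolynomial (Fin n) K) (Fin β → MvPolynomial (Fin n) K))
    (hV : ∀ e, 1 ≤ e →
      IsLeast {W : Submodule (MvPolynomial (Fin n) K) (Fin β → MvPolynomial (Fin n) K) |
        LinearMap.range (Matrix.mulVecLin (frobProd p U e)) ≤ bracketPower (p ^ e) W} (V e))
    :
    ∃ e : ℕ, 1 ≤ e ∧ ∀ j : ℕ, V (e + j) = V e := by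
  classical
  haveI : Fact p.Prime := ⟨hp⟩
  set d : ℕ := Finset.univ.sup (fun ij : Fin β × Fin β => (U ij.1 ij.2).totalDegree) with hd
  have hU : ∀ i j, (U i j).totalDegree ≤ d := fun i j =>
    Finset.le_sup (f := fun ij : Fin β × Fin β => (U ij.1 ij.2).totalDegree)
      (Finset.mem_univ (i, j))
  have hcol : ∀ e, 1 ≤ e → ∀ j,
      (fun i => frobProd p U e i j) ∈ bracketPower (p ^ e) (V e) := fun e he j =>
    (KatzAux.range_mulVecLin_le_iff _ _).mp (hV e he).1 j
  -- monotonicity of the chain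
  have hmono : ∀ e, 1 ≤ e → V (e + 1) ≤ V e := by
    intro e he
    refine (hV (e + 1) (le_trans he (Nat.le_succ e))).2 ?_
    show LinearMap.range (Matrix.mulVecLin (frobProd p U (e + 1)))
        ≤ bracketPower (p ^ (e + 1)) (V e)
    rw [KatzAux.range_mulVecLin_le_iff]
    intro j
    have hcolspan : (fun i => frobProd p U (e + 1) i j)
        = ∑ k, (U k j) • fun i => (frobProd p U e i k) ^ p := by
      rw [KatzAux.frobProd_succ_right]
      funext i
      rw [Finset.sum_apply]
      simp only [Matrix.mul_apply, Matrix.map_apply, Pi.smul_apply, smul_eq_mul]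
      exact Finset.sum_congr rfl fun k _ => mul_comm _ _
    rw [hcolspan]
    exact Submodule.sum_mem _ fun k _ => Submodule.smul_mem _ _
      (KatzAux.pow_mem_bracketPower e (hcol e he k))
  have hchain : ∀ a b, 1 ≤ a → a ≤ b → V b ≤ V a := by
    intro a b ha hab
    induction b, hab using Nat.le_induction with
    | base => exact le_refl _
    | succ b hb ih => exact le_trans (hmono b (le_trans ha hb)) ih
  -- bounded-degree generation
  have hgen : ∀ e, 1 ≤ e → V e = Submodule.span (MvPolynomial (Fin n) K)
      {w : Fin β → MvPolynomial (Fin n) K | w ∈ V e ∧ ∀ i, (w i).totalDegree ≤ d} := by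
    intro e he
    apply le_antisymm
    · refine (hV e he).2 ?_
      show LinearMap.range (Matrix.mulVecLin (frobProd p U e)) ≤ bracketPower (p ^ e) _
      rw [KatzAux.range_mulVecLin_le_iff]
      intro j
      refine KatzAux.bracketPower_degree_refine _ d e _ (hcol e he j) ?_
      intro i
      have h1 := KatzAux.frobProd_deg (p := p) U d hU e i j
      have h2 : d * (p ^ e - 1) ≤ p ^ e * d := by
        calc d * (p ^ e - 1) ≤ d * p ^ e := Nat.mul_le_mul_left d (Nat.sub_le _ _)
          _ = p ^ e * d := Nat.mul_comm _ _
      exact le_trans h1 h2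
    · rw [Submodule.span_le]
      exact fun w hw => hw.1
  -- finite-dimensional bookkeeping
  let Rd := MvPolynomial.restrictTotalDegree (Fin n) K d
  let Φ : (Fin β → Rd) →ₗ[K] (Fin β → MvPolynomial (Fin n) K) :=
    LinearMap.pi fun j => Rd.subtype.comp (LinearMap.proj j)
  let S : ℕ → Submodule K (Fin β → Rd) := fun e =>
    Submodule.comap Φ ((V e).restrictScalars K)
  have hrec : ∀ e, 1 ≤ e → V e = Submodule.span (MvPolynomial (Fin n) K)
      (Φ '' (S e : Set (Fin β → Rd))) := by
    intro e he
    apply le_antisymm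
    · conv_lhs => rw [hgen e he]
      refine Submodule.span_le.mpr ?_
      intro w hw
      have hwm : ∀ j, w j ∈ Rd := by
        intro j
        rw [MvPolynomial.mem_restrictTotalDegree]
        exact hw.2 j
      set f : Fin β → Rd := fun j => (⟨w j, hwm j⟩ : Rd) with hf
      have hΦf : Φ f = w := funext fun j => rfl
      have hfS : f ∈ S e := by
        show Φ f ∈ (V e).restrictScalars K
        rw [hΦf]
        exact hw.1
      exact Submodule.subset_span ⟨f, hfS, hΦf⟩
    · refine Submodule.span_le.mpr ?_
      rintro _ ⟨f, hf, rfl⟩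
      exact hf
  have hSmono : ∀ a b, 1 ≤ a → a ≤ b → S b ≤ S a := by
    intro a b ha hab x hx
    exact hchain a b ha hab hx
  let r : ℕ → ℕ := fun j => Module.finrank K (S (1 + j))
  have hr_anti : ∀ j k, j ≤ k → r k ≤ r j := by
    intro j k hjk
    exact Submodule.finrank_mono
      (hSmono (1 + j) (1 + k) (Nat.le_add_right 1 j) (by omega))
  have hne : (Set.range r).Nonempty := ⟨r 0, 0, rfl⟩
  obtain ⟨j0, hj0⟩ := Nat.sInf_mem hne
  have hstab : ∀ k, j0 ≤ k → S (1 + k) = S (1 + j0) := by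
    intro k hk
    have hle : S (1 + k) ≤ S (1 + j0) := hSmono _ _ (by omega) (by omega)
    have hr1 : r k ≤ r j0 := hr_anti j0 k hk
    have hr2 : r j0 ≤ r k := by
      rw [hj0]
      exact Nat.sInf_le ⟨k, rfl⟩
    exact Submodule.eq_of_le_of_finrank_eq hle (le_antisymm hr1 hr2)
  refine ⟨1 + j0, by omega, ?_⟩
  intro j
  have h1 : 1 + j0 + j = 1 + (j0 + j) := by omega
  rw [h1, hrec (1 + (j0 + j)) (by omega), hrec (1 + j0) (by omega),
    hstab (j0 + j) (by omega)]
end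

section
/- Let U be a β×β matrix over R all of whose entries have total degree at most δ. Define submodules L_j ⊆ R^β by L₀ = R^β and, for j ≥ 0, L_{j+1} is the smallest submodule W with U·L_j ⊆ W^{[p]} (where U·L_j is the submodule generated by {U·w : w ∈ L_j}). Then for every e ≥ 1 the submodule L_e is generated by vectors all of whose entries have total degree at most δ/(p−1); that is, L_e is generated by its elements v satisfying (p−1)·deg(v_i) ≤ δ for every coordinate i. -/
/-!
Let `K^p ⊆ K` be the subfield of `p`-th powers and `(b_l)` a basis of `K` over `K^p`. Then
`R = K[x]` is free over its subring `R^p` with basis the `x^μ b_l`, `μ < p` entrywise. Writing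
`Ψ_{μ,l}(f)` for the `p`-th root of the `(μ, l)`-coordinate of `f`, we have
`f = ∑ x^μ b_l Ψ_{μ,l}(f)^p` and `Ψ_{μ,l}(f g^p) = Ψ_{μ,l}(f) g`, so the least `W` with
`span S ⊆ W^{[p]}` is spanned by the vectors `Ψ_{μ,l}(v)`, `v ∈ S`. Moreover
`p · deg Ψ_{μ,l}(f) ≤ deg f`. So if `L_j` is spanned by vectors of degree at most
`d = ⌊δ/(p-1)⌋`, then `U` maps them to degree at most `δ + d`, and `Ψ` brings this back to
`⌊(δ + d)/p⌋ ≤ d`; induction from `L_0 = R^β` gives the theorem.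
-/

section BracketPower

variable {R : Type*} [CommRing R] {p β : ℕ} {ι : Type*} {Ψ : ι → R →+ R}

lemma comp_mem_of_mem_bracketPower {ψ : R →+ R} (hψ : ∀ f g, ψ (f * g ^ p) = ψ f * g)
    {W : Submodule R (Fin β → R)} {v : Fin β → R} (hv : v ∈ bracketPower p W) : ψ ∘ v ∈ W := by
  -- `ψ` is only additive, so the induction has to carry all multiples `c * v`.
  suffices ∀ c : R, (fun j => ψ (c * v j)) ∈ W by simpa [Function.comp_def] using this 1
  induction hv using Submodule.span_induction with
  | mem x hx =>
    obtain ⟨w, hw, rfl⟩ := hx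
    intro c
    convert W.smul_mem (ψ c) hw using 1
    ext j
    simp [hψ]
  | zero => simp [← Pi.zero_def]
  | add x y _ _ hx hy =>
    intro c
    convert W.add_mem (hx c) (hy c) using 1
    ext j
    simp [mul_add]
  | smul a x _ hx =>
    intro c
    simpa [mul_assoc] using hx (c * a)

lemma mem_bracketPower_of_forall_comp_mem {b : ι → R}
    (hb : ∀ F : Finset R, ∃ t : Finset ι, ∀ f ∈ F, f = ∑ i ∈ t, b i * Ψ i f ^ p)
    {W : Submodule R (Fin β → R)} {v : Fin β → R} (hv : ∀ i, Ψ i ∘ v ∈ W) :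
    v ∈ bracketPower p W := by
  classical
  obtain ⟨t, ht⟩ := hb (Finset.univ.image v)
  have hv_eq : v = ∑ i ∈ t, b i • fun j => (Ψ i ∘ v) j ^ p := by
    ext j
    simpa using ht (v j) (by simp)
  rw [hv_eq]
  exact Submodule.sum_mem _ fun i _ =>
    Submodule.smul_mem _ _ (Submodule.subset_span ⟨_, hv i, rfl⟩)

theorem isLeast_span_le_bracketPower {b : ι → R}
    (hΨ : ∀ i f g, Ψ i (f * g ^ p) = Ψ i f * g)
    (hb : ∀ F : Finset R, ∃ t : Finset ι, ∀ f ∈ F, f = ∑ i ∈ t, b i * Ψ i f ^ p)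
    (S : Set (Fin β → R)) :
    IsLeast {W | Submodule.span R S ≤ bracketPower p W}
      (Submodule.span R {w | ∃ i, ∃ v ∈ S, Ψ i ∘ v = w}) := by
  constructor
  · refine Submodule.span_le.mpr fun v hv => mem_bracketPower_of_forall_comp_mem hb fun i => ?_
    exact Submodule.subset_span ⟨i, v, hv, rfl⟩
  · intro W hW
    rw [Submodule.span_le]
    rintro _ ⟨i, v, hv, rfl⟩
    exact comp_mem_of_mem_bracketPower (hΨ i) (hW (Submodule.subset_span hv))

end BracketPower

lemma Nat.le_div_sub_one_of_mul_le_add_div {p x δ : ℕ} (hp : 1 < p)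
    (h : p * x ≤ δ + δ / (p - 1)) : x ≤ δ / (p - 1) := by
  by_contra! hx
  have hδ := Nat.lt_div_mul_add (a := δ) (Nat.sub_pos_of_lt hp)
  obtain ⟨q, rfl⟩ : ∃ q, p = q + 1 := ⟨p - 1, by omega⟩
  simp only [add_tsub_cancel_right] at *
  nlinarith

namespace Module.Basis

variable {K : Type*} [Field K] {p : ℕ} [ExpChar K p] {ι : Type*}
  (b : Basis ι (frobenius K p).fieldRange K)

noncomputable def frobCoord (l : ι) : K →+ K :=
  (frobenius K p).rangeRestrictFieldEquiv.symm.toAddMonoidHom.comp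
    ((Finsupp.lapply l).comp b.repr.toLinearMap).toAddMonoidHom

lemma frobCoord_pow_mul (l : ι) (a c : K) : b.frobCoord l (a ^ p * c) = a * b.frobCoord l c := by
  have : a ^ p * c = (frobenius K p).rangeRestrictFieldEquiv a • c := rfl
  simp [frobCoord, this]

lemma frobCoord_pow (l : ι) (c : K) : b.frobCoord l c ^ p = b.repr c l :=
  (frobenius K p).rangeRestrictFieldEquiv_apply_symm_apply _

lemma sum_frobCoord_pow_mul {c : K} {S : Finset ι} (hS : (b.repr c).support ⊆ S) :
    ∑ l ∈ S, b.frobCoord l c ^ p * b l = c := by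
  conv_rhs => rw [← b.linearCombination_repr c, Finsupp.linearCombination_apply,
    Finsupp.sum_of_support_subset _ hS (fun i a => a • b i) (fun _ _ => zero_smul _ _)]
  simp [frobCoord_pow, Subfield.smul_def]

end Module.Basis

namespace Finsupp

variable {σ : Type*} {p : ℕ}

lemma add_smul_inj_of_lt {μ μ' ν ν' : σ →₀ ℕ} (hμ : ∀ j, μ j < p) (hμ' : ∀ j, μ' j < p) :
    μ + p • ν = μ' + p • ν' ↔ μ = μ' ∧ ν = ν' := by
  refine ⟨fun h => ?_, by rintro ⟨rfl, rfl⟩; rfl⟩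
  have key : ∀ j, μ j = μ' j ∧ ν j = ν' j := fun j => by
    have hj : μ j + p * ν j = μ' j + p * ν' j := by simpa using DFunLike.congr_fun h j
    have h1 : μ j = μ' j := by
      simpa [Nat.add_mul_mod_self_left, Nat.mod_eq_of_lt (hμ j), Nat.mod_eq_of_lt (hμ' j)]
        using congr_arg (· % p) hj
    exact ⟨h1, Nat.eq_of_mul_eq_mul_left ((Nat.zero_le _).trans_lt (hμ j)) (by omega)⟩
  exact ⟨ext fun j => (key j).1, ext fun j => (key j).2⟩

noncomputable def natMod (p : ℕ) (m : σ →₀ ℕ) : σ →₀ ℕ := m.mapRange (· % p) (Nat.zero_mod p)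

noncomputable def natDiv (p : ℕ) (m : σ →₀ ℕ) : σ →₀ ℕ := m.mapRange (· / p) (Nat.zero_div p)

lemma natMod_lt (hp : 0 < p) (m : σ →₀ ℕ) (j : σ) : natMod p m j < p := Nat.mod_lt _ hp

lemma natMod_add_smul_natDiv (m : σ →₀ ℕ) : natMod p m + p • natDiv p m = m := by
  ext j
  exact Nat.mod_add_div _ _

end Finsupp

namespace MvPolynomial

open Finsupp

variable {σ K ι : Type*} [Field K] {p : ℕ} [ExpChar K p]
  (b : Module.Basis ι (frobenius K p).fieldRange K)

noncomputable def frobComponent (μ : σ →₀ ℕ) (l : ι) : MvPolynomial σ K →+ MvPolynomial σ K :=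
  AddMonoidAlgebra.coeffAddEquiv.symm.toAddMonoidHom.comp <|
    (mapRange.addMonoidHom (b.frobCoord l)).comp <|
      (comapDomain.addMonoidHom ((add_right_injective μ).comp
        (smul_right_injective _ (expChar_ne_zero K p)))).comp
        AddMonoidAlgebra.coeffAddEquiv.toAddMonoidHom

lemma coeff_frobComponent (μ ν : σ →₀ ℕ) (l : ι) (f : MvPolynomial σ K) :
    coeff ν (frobComponent b μ l f) = b.frobCoord l (coeff (μ + p • ν) f) :=
  rfl

variable {b}

open scoped Classical in
lemma frobComponent_monomial {μ μ' : σ →₀ ℕ} (hμ : ∀ j, μ j < p) (hμ' : ∀ j, μ' j < p)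
    (l : ι) (ν : σ →₀ ℕ) (c : K) :
    frobComponent b μ l (monomial (μ' + p • ν) c) =
      if μ' = μ then monomial ν (b.frobCoord l c) else 0 := by
  ext ν'
  simp only [coeff_frobComponent, coeff_monomial, add_smul_inj_of_lt hμ' hμ]
  by_cases h : μ' = μ <;> by_cases h' : ν = ν' <;> simp [h, h', coeff_monomial]

lemma frobComponent_mul_pow {μ : σ →₀ ℕ} (hμ : ∀ j, μ j < p) (l : ι)
    (f g : MvPolynomial σ K) :
    frobComponent b μ l (f * g ^ p) = frobComponent b μ l f * g := by
  induction g using MvPolynomial.induction_on' with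
  | add g₁ g₂ h₁ h₂ => rw [add_pow_expChar, mul_add, map_add, h₁, h₂, mul_add]
  | monomial m a =>
    induction f using MvPolynomial.induction_on' with
    | add f₁ f₂ h₁ h₂ => rw [add_mul, map_add, h₁, h₂, map_add, add_mul]
    | monomial m' c =>
      have hr := natMod_lt (expChar_pos K p) m'
      rw [← natMod_add_smul_natDiv (p := p) m', monomial_pow, monomial_mul, add_assoc,
        ← smul_add, frobComponent_monomial hμ hr, frobComponent_monomial hμ hr]
      split_ifs
      · rw [monomial_mul, mul_comm c, b.frobCoord_pow_mul, mul_comm a]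
      · rw [zero_mul]

lemma totalDegree_frobComponent_le (μ : σ →₀ ℕ) (l : ι) (f : MvPolynomial σ K) :
    p * (frobComponent b μ l f).totalDegree ≤ f.totalDegree := by
  have hp := expChar_pos K p
  rw [mul_comm, ← Nat.le_div_iff_mul_le hp]
  refine Finset.sup_le fun ν hν => (Nat.le_div_iff_mul_le hp).mpr ?_
  have hc : coeff (μ + p • ν) f ≠ 0 := fun h0 =>
    mem_support_iff.mp hν (by rw [coeff_frobComponent, h0, map_zero])
  calc degree ν * p ≤ degree (μ + p • ν) := by simp [mul_comm]
    _ ≤ f.totalDegree := le_totalDegree (mem_support_iff.mpr hc)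

lemma sum_monomial_mul_frobComponent_monomial_pow {A : Finset {μ : σ →₀ ℕ // ∀ j, μ j < p}}
    {S : Finset ι} {r q : σ →₀ ℕ} (hr : ∀ j, r j < p) (hA : ⟨r, hr⟩ ∈ A) {c : K}
    (hS : (b.repr c).support ⊆ S) :
    ∑ μ ∈ A, ∑ l ∈ S, monomial (μ : σ →₀ ℕ) (b l) *
      frobComponent b μ l (monomial (r + p • q) c) ^ p = monomial (r + p • q) c := by
  rw [Finset.sum_eq_single_of_mem _ hA]
  · simp only [frobComponent_monomial hr hr, if_pos, monomial_pow, monomial_mul]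
    rw [← map_sum]
    simp_rw [mul_comm (b _ : K)]
    rw [b.sum_frobCoord_pow_mul hS]
  · intro μ _ hμr
    refine Finset.sum_eq_zero fun l _ => ?_
    rw [frobComponent_monomial μ.2 hr, if_neg (fun h => hμr (Subtype.ext h).symm),
      zero_pow (expChar_ne_zero K p), mul_zero]

lemma sum_monomial_mul_frobComponent_pow (f : MvPolynomial σ K)
    {A : Finset {μ : σ →₀ ℕ // ∀ j, μ j < p}} {S : Finset ι}
    (hA : ∀ m ∈ f.support, ⟨natMod p m, natMod_lt (expChar_pos K p) m⟩ ∈ A)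
    (hS : ∀ m ∈ f.support, (b.repr (coeff m f)).support ⊆ S) :
    ∑ μ ∈ A, ∑ l ∈ S, monomial (μ : σ →₀ ℕ) (b l) * frobComponent b μ l f ^ p = f := by
  conv_lhs => rw [f.as_sum]
  simp only [map_sum, sum_pow_char, Finset.mul_sum]
  rw [Finset.sum_congr rfl fun μ _ => Finset.sum_comm, Finset.sum_comm]
  conv_rhs => rw [f.as_sum]
  refine Finset.sum_congr rfl fun m hm => ?_
  have := sum_monomial_mul_frobComponent_monomial_pow (natMod_lt (expChar_pos K p) m) (hA m hm)
    (hS m hm) (q := natDiv p m)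
  rwa [natMod_add_smul_natDiv] at this

lemma exists_finset_eq_sum_monomial_mul_frobComponent_pow (F : Finset (MvPolynomial σ K)) :
    ∃ t : Finset ({μ : σ →₀ ℕ // ∀ j, μ j < p} × ι), ∀ f ∈ F,
      f = ∑ i ∈ t, monomial (i.1 : σ →₀ ℕ) (b i.2) * frobComponent b i.1 i.2 f ^ p := by
  classical
  refine ⟨(F.biUnion fun f => f.support.image fun m =>
      ⟨natMod p m, natMod_lt (expChar_pos K p) m⟩) ×ˢ
    F.biUnion fun f => f.support.biUnion fun m => (b.repr (coeff m f)).support, fun f hf => ?_⟩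
  rw [Finset.sum_product]
  refine (sum_monomial_mul_frobComponent_pow f (fun m hm => ?_) (fun m hm => ?_)).symm
  · exact Finset.mem_biUnion.mpr ⟨f, hf, Finset.mem_image_of_mem _ hm⟩
  · intro l hl
    simp only [Finset.mem_biUnion]
    exact ⟨f, hf, m, hm, hl⟩

variable (b) in
theorem isLeast_span_le_bracketPower {β : ℕ} (S : Set (Fin β → MvPolynomial σ K)) :
    IsLeast {W | Submodule.span (MvPolynomial σ K) S ≤ bracketPower p W}
      (Submodule.span (MvPolynomial σ K) {w | ∃ i : {μ : σ →₀ ℕ // ∀ j, μ j < p} × ι,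
        ∃ v ∈ S, frobComponent b i.1 i.2 ∘ v = w}) :=
  _root_.isLeast_span_le_bracketPower (p := p)
    (fun i : {μ : σ →₀ ℕ // ∀ j, μ j < p} × ι => frobComponent_mul_pow (b := b) i.1.2 i.2)
    exists_finset_eq_sum_monomial_mul_frobComponent_pow S

open Matrix in
lemma totalDegree_mulVec_le {R m n : Type*} [CommSemiring R] [Fintype n]
    {U : Matrix m n (MvPolynomial σ R)} {v : n → MvPolynomial σ R} {i : m} {δ e : ℕ}
    (hU : ∀ j, (U i j).totalDegree ≤ δ) (hv : ∀ j, (v j).totalDegree ≤ e) :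
    ((U *ᵥ v) i).totalDegree ≤ δ + e :=
  totalDegree_finsetSum_le fun j _ => (totalDegree_mul _ _).trans (add_le_add (hU j) (hv j))

def SpannedInDegreeLE {R κ : Type*} [CommSemiring R]
    (N : Submodule (MvPolynomial σ R) (κ → MvPolynomial σ R)) (d : ℕ) : Prop :=
  ∃ G : Set (κ → MvPolynomial σ R),
    N = Submodule.span _ G ∧ ∀ v ∈ G, ∀ i, (v i).totalDegree ≤ d

section SpannedInDegreeLE

variable {R κ : Type*} [CommSemiring R] {N : Submodule (MvPolynomial σ R) (κ → MvPolynomial σ R)}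
  {d : ℕ}

lemma spannedInDegreeLE_top [Finite κ] [DecidableEq κ] (d : ℕ) :
    SpannedInDegreeLE (⊤ : Submodule (MvPolynomial σ R) (κ → MvPolynomial σ R)) d := by
  refine ⟨Set.range (Pi.basisFun _ _), (Module.Basis.span_eq _).symm, ?_⟩
  rintro _ ⟨j, rfl⟩ i
  by_cases h : i = j <;> simp [h]

lemma SpannedInDegreeLE.eq_span (h : SpannedInDegreeLE N d) :
    N = Submodule.span _ {v | v ∈ N ∧ ∀ i, (v i).totalDegree ≤ d} := by
  obtain ⟨G, rfl, hG⟩ := h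
  refine le_antisymm (Submodule.span_mono fun v hv => ⟨Submodule.subset_span hv, hG v hv⟩) ?_
  exact Submodule.span_le.mpr fun v hv => hv.1

end SpannedInDegreeLE

lemma SpannedInDegreeLE.of_isLeast (hp : 1 < p) {β : ℕ} {κ : Type*} {δ : ℕ} [Fintype κ]
    {U : Matrix (Fin β) κ (MvPolynomial σ K)} (hU : ∀ i j, (U i j).totalDegree ≤ δ)
    {N : Submodule (MvPolynomial σ K) (κ → MvPolynomial σ K)}
    (hN : SpannedInDegreeLE N (δ / (p - 1)))
    {N' : Submodule (MvPolynomial σ K) (Fin β → MvPolynomial σ K)}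
    (hN' : IsLeast {W | N.map U.mulVecLin ≤ bracketPower p W} N') :
    SpannedInDegreeLE N' (δ / (p - 1)) := by
  obtain ⟨G, rfl, hG⟩ := hN
  rw [Submodule.map_span] at hN'
  refine ⟨_, hN'.unique (isLeast_span_le_bracketPower
    (Module.Basis.ofVectorSpace (frobenius K p).fieldRange K) _), ?_⟩
  rintro _ ⟨i, _, ⟨g, hg, rfl⟩, rfl⟩ j
  exact Nat.le_div_sub_one_of_mul_le_add_div hp <|
    (totalDegree_frobComponent_le _ _ _).trans (totalDegree_mulVec_le (hU j) (hG g hg))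

end MvPolynomial

/-- **Statement 10.** Let `R = K[x₁,…,xₙ]` with `K` a field of prime characteristic `p`, and
let `U` be a `β×β` matrix over `R` all of whose entries have total degree at most `δ`.
Define `L₀ = R^β` and let `L_{j+1}` be the smallest submodule `W` with `U·L_j ⊆ W^{[p]}`.
Then for every `e ≥ 1`, `L_e` is generated by vectors all of whose entries have total degree
at most `δ/(p-1)`, i.e. by its elements `v` with `(p-1)·deg(vᵢ) ≤ δ` for every coordinate. -/
theorem Le_generated_in_bounded_degree
    {K : Type*} [Field K] {p n β : ℕ} (hp : p.Prime) [CharP K p]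
    (δ : ℕ)
    (U : Matrix (Fin β) (Fin β) (MvPolynomial (Fin n) K))
    (hU : ∀ i j, (U i j).totalDegree ≤ δ)
    (L : ℕ → Submodule (MvPolynomial (Fin n) K) (Fin β → MvPolynomial (Fin n) K))
    (hL0 : L 0 = ⊤)
    (hL : ∀ j : ℕ,
      IsLeast {W : Submodule (MvPolynomial (Fin n) K) (Fin β → MvPolynomial (Fin n) K) |
        Submodule.map (Matrix.mulVecLin U) (L j) ≤ bracketPower p W} (L (j + 1))) :
    ∀ e : ℕ, 1 ≤ e →
      L e = Submodule.span (MvPolynomial (Fin n) K)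
        {v : Fin β → MvPolynomial (Fin n) K |
          v ∈ L e ∧ ∀ i, (p - 1) * (v i).totalDegree ≤ δ} := by
  have := Fact.mk hp
  have hspan : ∀ e, MvPolynomial.SpannedInDegreeLE (L e) (δ / (p - 1)) := by
    intro e
    induction e with
    | zero => exact hL0 ▸ MvPolynomial.spannedInDegreeLE_top _
    | succ e ih => exact ih.of_isLeast hp.one_lt hU (hL e)
  intro e _
  convert (hspan e).eq_span using 6 with v i
  rw [Nat.le_div_iff_mul_le (Nat.sub_pos_of_lt hp.one_lt), mul_comm]
end
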